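/- arXiv:math/0211183 — 8 statements merged into one kernel-verified Lean document; each statement's English description precedes it below -/
import Mathlib

section
/- Let A and B be mutually visible compact convex regions in a visibility representation by disjoint compact convex regions. If some other region of the representation intersects a line segment joining a point of A to a point of B, then the edge AB is contained in a triangle of the visibility graph: there is a region C adjacent to both A and B. -/
open Set

/-- A sightline between the regions of `u` and `v`: a segment from a point of `F u`
to a point of `F v` meeting no other region. -/
def Sightline {V : Type*} (F : V → Set (ℝ × ℝ)) (u v : V) : Prop :=
  ∃ a ∈ F u, ∃ b ∈ F v, ∀ w, w ≠ u → w ≠ v → segment ℝ a b ∩ F w = ∅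

/-- A visibility representation of a simple graph by regions in the plane. -/
structure IsVisRep {V : Type*} (G : SimpleGraph V) (F : V → Set (ℝ × ℝ)) : Prop where
  nonempty : ∀ v, (F v).Nonempty
  disjoint : ∀ u v, u ≠ v → Disjoint (F u) (F v)
  adj_iff : ∀ u v, u ≠ v → (G.Adj u v ↔ Sightline F u v)

/-!
Sweep a segment from a fixed point `x₀` of a region `X` to a point `f t` moving linearly inside
a region `Y`, from a clear position `f 0` to a blocked one `f 1`. At the first blocked time `t₁`
let `D` be the first region met on `[x₀, f t₁]`, at a point `p`; the piece of that segment from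
the last point of `X` to `p` is a sightline from `X` to `D`. For `t < t₁` close to `t₁` the
segment `[p, f t]` misses `X`, and each of its points other than `p` lies on a clear segment
`[x₀, f r]` with `t ≤ r < t₁`, so it is a sightline from `D` to `Y`. Given a sightline `a₀b₀`,
fix `a₀` and sweep from `b₀` to `b` if `[a₀, b]` is blocked; otherwise fix `b` and sweep from
`a₀` to `a`.
-/

open AffineMap Filter Topology

section Segments

variable {E : Type*} [AddCommGroup E] [Module ℝ E] [TopologicalSpace E]
  [IsTopologicalAddGroup E] [ContinuousSMul ℝ E]

theorem isClosed_setOf_segment_lineMap_inter_nonempty (p q r : E) {S : Set E}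
    (hS : IsClosed S) :
    IsClosed {t ∈ Icc (0 : ℝ) 1 | (segment ℝ p (lineMap q r t) ∩ S).Nonempty} := by
  set g : ℝ × ℝ → E := fun u => lineMap p (lineMap q r u.1) u.2
  have hg : Continuous g := by
    simp only [g, lineMap_apply_module]
    fun_prop
  have himage : {t ∈ Icc (0 : ℝ) 1 | (segment ℝ p (lineMap q r t) ∩ S).Nonempty} =
      Prod.fst '' (Icc 0 1 ×ˢ Icc 0 1 ∩ g ⁻¹' S) := by
    simp only [segment_eq_image_lineMap]
    ext t
    constructor
    · rintro ⟨ht, _, ⟨θ, hθ, rfl⟩, hS⟩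
      exact ⟨(t, θ), ⟨⟨ht, hθ⟩, hS⟩, rfl⟩
    · rintro ⟨⟨t, θ⟩, ⟨⟨ht, hθ⟩, hS⟩, rfl⟩
      exact ⟨ht, _, ⟨θ, hθ, rfl⟩, hS⟩
  rw [himage]
  exact (((isCompact_Icc.prod isCompact_Icc).inter_right (hS.preimage hg)).image
    continuous_fst).isClosed

end Segments

theorem exists_mem_Ico_lineMap_mem_segment {𝕜 E : Type*} [Field 𝕜] [LinearOrder 𝕜]
    [IsOrderedRing 𝕜] [AddCommGroup E] [Module 𝕜 E] (x q₀ q₁ : E) {μ lam : 𝕜}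
    (hμ : μ ∈ Icc (0 : 𝕜) 1) (hlam : lam ∈ Ioc (0 : 𝕜) 1) :
    ∃ s ∈ Ico (0 : 𝕜) 1, lineMap (lineMap x q₁ μ) q₀ lam ∈ segment 𝕜 x (lineMap q₀ q₁ s) := by
  have hμlam : 0 ≤ (1 - lam) * μ := mul_nonneg (sub_nonneg.2 hlam.2) hμ.1
  set m := (1 - lam) * μ + lam
  have hm : 0 < m := by linarith [hlam.1]
  refine ⟨(1 - lam) * μ / m, ⟨div_nonneg hμlam hm.le, (div_lt_one hm).2 (by linarith [hlam.1])⟩,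
    ?_⟩
  rw [segment_eq_image_lineMap]
  refine ⟨m, ⟨hm.le, ?_⟩, ?_⟩
  · nlinarith [hμ.2, hlam.2]
  · simp only [lineMap_apply_module]
    match_scalars <;> field_simp <;> ring

section Regions

variable {V : Type*} {F : V → Set (ℝ × ℝ)}

theorem exists_sightline_to_first_blocker [Finite V]
    (hdis : ∀ u v, u ≠ v → Disjoint (F u) (F v)) (hcl : ∀ v, IsClosed (F v))
    (hconv : ∀ v, Convex ℝ (F v)) {X Y : V} {x y : ℝ × ℝ} (hx : x ∈ F X) (hy : y ∈ F Y)
    (hblk : ∃ w, w ≠ X ∧ w ≠ Y ∧ (segment ℝ x y ∩ F w).Nonempty) :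
    ∃ D, D ≠ X ∧ D ≠ Y ∧ Sightline F X D ∧
      ∃ p ∈ F D, p ∈ segment ℝ x y ∧ segment ℝ p y ∩ F X = ∅ := by
  set P : ℝ →ᵃ[ℝ] ℝ × ℝ := lineMap x y
  set J : V → Set ℝ := fun w => Icc 0 1 ∩ P ⁻¹' F w
  have hJ_cpt (w : V) : IsCompact (J w) :=
    isCompact_Icc.inter_right ((hcl w).preimage lineMap_continuous)
  have hJ_conn (w : V) : (J w).OrdConnected :=
    ((convex_Icc 0 1).inter ((hconv w).affine_preimage P)).ordConnected
  have hJ_disj {u v : V} (huv : u ≠ v) {c : ℝ} (hu : c ∈ J u) (hv : c ∈ J v) : False :=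
    disjoint_left.1 (hdis u v huv) hu.2 hv.2
  have h0 : (0 : ℝ) ∈ J X := ⟨left_mem_Icc.2 zero_le_one, by simpa [P] using hx⟩
  have h1 : (1 : ℝ) ∈ J Y := ⟨right_mem_Icc.2 zero_le_one, by simpa [P] using hy⟩
  set K := ⋃ (w) (_ : w ≠ X ∧ w ≠ Y), J w
  have hK_ne : K.Nonempty := by
    obtain ⟨w, hwX, hwY, _, hz, hzw⟩ := hblk
    rw [segment_eq_image_lineMap] at hz
    obtain ⟨c, hc, rfl⟩ := hz
    exact ⟨c, mem_iUnion₂.2 ⟨w, ⟨hwX, hwY⟩, hc, hzw⟩⟩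
  have hK_cpt : IsCompact K := isCompact_iUnion fun w => isCompact_iUnion fun _ => hJ_cpt w
  obtain ⟨α, hαK, hαmin⟩ := hK_cpt.exists_isLeast hK_ne
  obtain ⟨D, ⟨hDX, hDY⟩, hαD⟩ := mem_iUnion₂.1 hαK
  obtain ⟨uX, huX, huXmax⟩ := (hJ_cpt X).exists_isGreatest ⟨0, h0⟩
  have huXα : uX < α := by
    by_contra! h
    exact hJ_disj hDX hαD ((hJ_conn X).out h0 huX ⟨hαD.1.1, h⟩)
  refine ⟨D, hDX, hDY, ⟨P uX, huX.2, P α, hαD.2, fun w hwX hwD => ?_⟩, P α, hαD.2, ?_, ?_⟩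
  · rw [← image_segment, segment_eq_Icc huXα.le, eq_empty_iff_forall_notMem]
    rintro _ ⟨⟨c, hc, rfl⟩, hcw⟩
    have hcJ : c ∈ J w := ⟨⟨huX.1.1.trans hc.1, hc.2.trans hαD.1.2⟩, hcw⟩
    by_cases hwY : w = Y
    · subst hwY
      exact hJ_disj hDY hαD ((hJ_conn w).out hcJ h1 ⟨hc.2, hαD.1.2⟩)
    · have hc_eq : c = α := le_antisymm hc.2 (hαmin (mem_iUnion₂.2 ⟨w, ⟨hwX, hwY⟩, hcJ⟩))
      exact hJ_disj (Ne.symm hwD) hαD (hc_eq ▸ hcJ)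
  · rw [segment_eq_image_lineMap]
    exact ⟨α, hαD.1, rfl⟩
  · rw [← lineMap_apply_one (k := ℝ) x y, ← image_segment, segment_eq_Icc hαD.1.2,
      eq_empty_iff_forall_notMem]
    rintro _ ⟨⟨c, hc, rfl⟩, hcX⟩
    have hcJ : c ∈ J X := ⟨⟨huX.1.1.trans (huXα.le.trans hc.1), hc.2⟩, hcX⟩
    exact (huXα.trans_le hc.1).not_ge (huXmax hcJ)

theorem sightline_of_clear_fan (hdis : ∀ u v, u ≠ v → Disjoint (F u) (F v))
    {X Y D : V} {x₀ q₀ q₁ p : ℝ × ℝ}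
    (hfan : ∀ s ∈ Ico (0 : ℝ) 1, ∀ w, w ≠ X → w ≠ Y → segment ℝ x₀ (lineMap q₀ q₁ s) ∩ F w = ∅)
    (hq₀ : q₀ ∈ F Y) (hp : p ∈ F D) (hpseg : p ∈ segment ℝ x₀ q₁)
    (hpX : segment ℝ p q₀ ∩ F X = ∅) :
    Sightline F Y D := by
  refine ⟨q₀, hq₀, p, hp, fun w hwY hwD => ?_⟩
  rw [segment_symm]
  by_cases hwX : w = X
  · exact hwX ▸ hpX
  rw [eq_empty_iff_forall_notMem]
  rintro _ ⟨hz, hzw⟩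
  rw [segment_eq_image_lineMap] at hz hpseg
  obtain ⟨lam, hlam, rfl⟩ := hz
  obtain ⟨μ, hμ, rfl⟩ := hpseg
  rcases hlam.1.eq_or_lt with rfl | hlam0
  · rw [lineMap_apply_zero] at hzw
    exact disjoint_left.1 (hdis D w (Ne.symm hwD)) hp hzw
  · obtain ⟨s, hs, hzs⟩ := exists_mem_Ico_lineMap_mem_segment x₀ q₀ q₁ hμ ⟨hlam0, hlam.2⟩
    exact (hfan s hs w hwX hwY).subset ⟨hzs, hzw⟩

theorem exists_common_sightline_of_sweep [Finite V]
    (hdis : ∀ u v, u ≠ v → Disjoint (F u) (F v)) (hcl : ∀ v, IsClosed (F v))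
    (hconv : ∀ v, Convex ℝ (F v)) {X Y : V} {x₀ y₀ y₁ : ℝ × ℝ}
    (hx₀ : x₀ ∈ F X) (hy₀ : y₀ ∈ F Y) (hy₁ : y₁ ∈ F Y)
    (hclear : ∀ w, w ≠ X → w ≠ Y → segment ℝ x₀ y₀ ∩ F w = ∅)
    (hblk : ∃ w, w ≠ X ∧ w ≠ Y ∧ (segment ℝ x₀ y₁ ∩ F w).Nonempty) :
    ∃ D, D ≠ X ∧ D ≠ Y ∧ Sightline F X D ∧ Sightline F Y D := by
  set f : ℝ →ᵃ[ℝ] ℝ × ℝ := lineMap y₀ y₁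
  have hfY (t : ℝ) (ht : t ∈ Icc (0 : ℝ) 1) : f t ∈ F Y :=
    (hconv Y).segment_subset hy₀ hy₁ (by rw [segment_eq_image_lineMap]; exact ⟨t, ht, rfl⟩)
  set T := ⋃ (w) (_ : w ≠ X ∧ w ≠ Y),
    {t ∈ Icc (0 : ℝ) 1 | (segment ℝ x₀ (f t) ∩ F w).Nonempty}
  have hT_cpt : IsCompact T :=
    isCompact_Icc.of_isClosed_subset
      (isClosed_iUnion_of_finite fun w => isClosed_iUnion_of_finite fun _ =>
        isClosed_setOf_segment_lineMap_inter_nonempty _ _ _ (hcl w))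
      (iUnion₂_subset fun _ _ _ ht => ht.1)
  have h1T : (1 : ℝ) ∈ T := by
    obtain ⟨w, hwX, hwY, hw⟩ := hblk
    exact mem_iUnion₂.2 ⟨w, ⟨hwX, hwY⟩, right_mem_Icc.2 zero_le_one, by simpa [f] using hw⟩
  obtain ⟨t₁, ht₁T, ht₁min⟩ := hT_cpt.exists_isLeast ⟨1, h1T⟩
  obtain ⟨W, hW, ht₁⟩ := mem_iUnion₂.1 ht₁T
  have ht₁pos : 0 < t₁ := by
    refine ht₁.1.1.lt_of_ne fun h => ?_
    have hne := ht₁.2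
    rw [← h, show f 0 = y₀ from lineMap_apply_zero _ _, hclear W hW.1 hW.2] at hne
    exact not_nonempty_empty hne
  have hfan (t : ℝ) (ht : t ∈ Ico 0 t₁) (w : V) (hwX : w ≠ X) (hwY : w ≠ Y) :
      segment ℝ x₀ (f t) ∩ F w = ∅ :=
    not_nonempty_iff_eq_empty.1 fun h => ht.2.not_ge <|
      ht₁min (mem_iUnion₂.2 ⟨w, ⟨hwX, hwY⟩, ⟨ht.1, ht.2.le.trans ht₁.1.2⟩, h⟩)
  obtain ⟨D, hDX, hDY, hXD, p, hpD, hpseg, hpX⟩ :=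
    exists_sightline_to_first_blocker hdis hcl hconv hx₀ (hfY t₁ ht₁.1) ⟨W, hW.1, hW.2, ht₁.2⟩
  set TX := {t ∈ Icc (0 : ℝ) 1 | (segment ℝ p (f t) ∩ F X).Nonempty}
  have ht₁TX : TXᶜ ∈ 𝓝 t₁ :=
    (isClosed_setOf_segment_lineMap_inter_nonempty _ _ _ (hcl X)).isOpen_compl.mem_nhds
      fun h => not_nonempty_iff_eq_empty.2 hpX h.2
  obtain ⟨th, ⟨hth0, hth1⟩, hthX⟩ :=
    Filter.nonempty_of_mem (inter_mem (Ioo_mem_nhdsLT ht₁pos) (nhdsWithin_le_nhds ht₁TX))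
  refine ⟨D, hDX, hDY, hXD, sightline_of_clear_fan hdis (q₀ := f th) (q₁ := f t₁) ?_
    (hfY th ⟨hth0.le, hth1.le.trans ht₁.1.2⟩) hpD hpseg
    (not_nonempty_iff_eq_empty.1 fun h => hthX ⟨⟨hth0.le, hth1.le.trans ht₁.1.2⟩, h⟩)⟩
  intro s hs w hwX hwY
  rw [← AffineMap.apply_lineMap]
  refine hfan _ ⟨?_, ?_⟩ w hwX hwY <;> rw [lineMap_apply_ring'] <;> nlinarith [hs.1, hs.2]

end Regions

theorem stmt1 {V : Type*} [Fintype V] (G : SimpleGraph V) (F : V → Set (ℝ × ℝ))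
    (hrep : IsVisRep G F) (hcpt : ∀ v, IsCompact (F v)) (hconv : ∀ v, Convex ℝ (F v))
    (A B : V) (hAB : G.Adj A B)
    (a : ℝ × ℝ) (ha : a ∈ F A) (b : ℝ × ℝ) (hb : b ∈ F B)
    (C : V) (hCA : C ≠ A) (hCB : C ≠ B) (hblock : (segment ℝ a b ∩ F C).Nonempty) :
    ∃ D : V, G.Adj A D ∧ G.Adj B D := by
  obtain ⟨a₀, ha₀, b₀, hb₀, hs⟩ := (hrep.adj_iff A B hAB.ne).1 hAB
  have hcl (v : V) : IsClosed (F v) := (hcpt v).isClosed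
  have adj_of {D : V} (hDA : D ≠ A) (hDB : D ≠ B) (hA : Sightline F A D)
      (hB : Sightline F B D) : G.Adj A D ∧ G.Adj B D :=
    ⟨(hrep.adj_iff A D hDA.symm).2 hA, (hrep.adj_iff B D hDB.symm).2 hB⟩
  by_cases hblk : ∃ w, w ≠ A ∧ w ≠ B ∧ (segment ℝ a₀ b ∩ F w).Nonempty
  · obtain ⟨D, hDA, hDB, hA, hB⟩ :=
      exists_common_sightline_of_sweep hrep.disjoint hcl hconv ha₀ hb₀ hb hs hblk
    exact ⟨D, adj_of hDA hDB hA hB⟩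
  · have hclear (w : V) (hwB : w ≠ B) (hwA : w ≠ A) : segment ℝ b a₀ ∩ F w = ∅ :=
      not_nonempty_iff_eq_empty.1 fun h => hblk ⟨w, hwA, hwB, segment_symm ℝ b a₀ ▸ h⟩
    obtain ⟨D, hDB, hDA, hB, hA⟩ := exists_common_sightline_of_sweep hrep.disjoint hcl hconv
      hb ha₀ ha hclear ⟨C, hCB, hCA, segment_symm ℝ a b ▸ hblock⟩
    exact ⟨D, adj_of hDA hDB hA hB⟩
end

section
/- Every nonempty compact visibility graph is connected: if a graph has a visibility representation by at least one and finitely many disjoint nonempty compact connected regions in R^2, then the graph is connected. -/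
open Set

lemma vis_walk {V : Type*} [Fintype V] (G : SimpleGraph V)
    (F : V → Set (ℝ × ℝ)) (hrep : IsVisRep G F) (hcpt : ∀ x, IsCompact (F x))
    (v : V) (p : ℝ →ᵃ[ℝ] (ℝ × ℝ)) (hpc : Continuous p) (hb : p 1 ∈ F v) :
    ∀ n : ℕ, ∀ u : V, ∀ s : ℝ, s ≤ 1 → p s ∈ F u →
      (∀ t, s < t → t ≤ 1 → p t ∉ F u) →
      {x : V | ∃ t, s < t ∧ t ≤ 1 ∧ p t ∈ F x}.ncard ≤ n →
      G.Reachable u v := by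
  intro n
  induction n with
  | zero =>
    intro u s hs1 hsu _hlast hcard
    by_cases huv : u = v
    · exact huv ▸ SimpleGraph.Reachable.refl _
    exfalso
    have hs : s < 1 := by
      rcases lt_or_eq_of_le hs1 with h | h
      · exact h
      · exact (Set.disjoint_left.mp (hrep.disjoint u v huv) (h ▸ hsu) hb).elim
    have : v ∈ {x : V | ∃ t, s < t ∧ t ≤ 1 ∧ p t ∈ F x} := ⟨1, hs, le_refl _, hb⟩
    have := (Set.ncard_pos (Set.toFinite _)).mpr ⟨v, this⟩
    omega
  | succ n ih =>
    intro u s hs1 hsu hlast hcard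
    by_cases huv : u = v
    · exact huv ▸ SimpleGraph.Reachable.refl _
    have hs : s < 1 := by
      rcases lt_or_eq_of_le hs1 with h | h
      · exact h
      · exact (Set.disjoint_left.mp (hrep.disjoint u v huv) (h ▸ hsu) hb).elim
    -- the union of all other regions, pulled back along p
    set C : Set (ℝ × ℝ) := ⋃ x ∈ ({u}ᶜ : Set V), F x with hC
    have hCclosed : IsClosed C :=
      Set.Finite.isClosed_biUnion (Set.toFinite _) fun x _ => (hcpt x).isClosed
    set A : Set ℝ := Icc s 1 ∩ p ⁻¹' C with hA
    have hAcpt : IsCompact A := isCompact_Icc.inter_right (hCclosed.preimage hpc)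
    have hAne : A.Nonempty := ⟨1, ⟨hs.le, le_refl _⟩, Set.mem_biUnion (Set.mem_compl_singleton_iff.mpr (Ne.symm huv)) hb⟩
    set t1 := sInf A with ht1def
    have ht1 : t1 ∈ A := hAcpt.sInf_mem hAne
    obtain ⟨⟨hst1, ht11⟩, ht1C⟩ := ht1
    obtain ⟨w, hwu, hw⟩ : ∃ w, w ≠ u ∧ p t1 ∈ F w := by
      simpa [hC, Set.mem_iUnion] using ht1C
    have hst1' : s < t1 := by
      rcases lt_or_eq_of_le hst1 with h | h
      · exact h
      · exact (Set.disjoint_left.mp (hrep.disjoint w u hwu) (h ▸ hw) hsu).elim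
    -- adjacency u w via the segment from p s to p t1
    have hadj : G.Adj u w := by
      rw [hrep.adj_iff u w (Ne.symm hwu)]
      refine ⟨p s, hsu, p t1, hw, fun x hxu hxw => ?_⟩
      rw [Set.eq_empty_iff_forall_notMem]
      rintro z ⟨hzseg, hzx⟩
      have : z ∈ p '' segment ℝ s t1 := by rw [image_segment]; exact hzseg
      obtain ⟨t, htseg, rfl⟩ := this
      rw [segment_eq_Icc hst1'.le] at htseg
      obtain ⟨hts, htt1⟩ := htseg
      rcases lt_or_eq_of_le htt1 with h | h
      · rcases lt_or_eq_of_le hts with h' | h'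
        · exact absurd (csInf_le hAcpt.bddBelow
            ⟨⟨h'.le, h.le.trans ht11⟩, Set.mem_biUnion (Set.mem_compl_singleton_iff.mpr hxu) hzx⟩) (not_le.mpr h)
        · exact Set.disjoint_left.mp (hrep.disjoint x u hxu) hzx (h' ▸ hsu)
      · exact Set.disjoint_left.mp (hrep.disjoint x w hxw) hzx (h ▸ hw)
    -- last time in F w
    set B : Set ℝ := Icc t1 1 ∩ p ⁻¹' F w with hB
    have hBcpt : IsCompact B := isCompact_Icc.inter_right ((hcpt w).isClosed.preimage hpc)
    have hBne : B.Nonempty := ⟨t1, ⟨le_refl _, ht11⟩, hw⟩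
    set s' := sSup B with hs'def
    have hs' : s' ∈ B := hBcpt.sSup_mem hBne
    obtain ⟨⟨ht1s', hs'1⟩, hs'w⟩ := hs'
    have hlast' : ∀ t, s' < t → t ≤ 1 → p t ∉ F w := fun t ht ht1' htw =>
      absurd (le_csSup hBcpt.bddAbove ⟨⟨ht1s'.trans ht.le, ht1'⟩, htw⟩) (not_le.mpr ht)
    have hss' : s < s' := hst1'.trans_le ht1s'
    -- the new set is strictly smaller
    have hsub : {x : V | ∃ t, s' < t ∧ t ≤ 1 ∧ p t ∈ F x} ⊂
        {x : V | ∃ t, s < t ∧ t ≤ 1 ∧ p t ∈ F x} := by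
      constructor
      · rintro x ⟨t, ht1', ht2, ht3⟩; exact ⟨t, hss'.trans ht1', ht2, ht3⟩
      · intro hcontra
        have hwmem : w ∈ {x : V | ∃ t, s < t ∧ t ≤ 1 ∧ p t ∈ F x} := ⟨t1, hst1', ht11, hw⟩
        obtain ⟨t, ht1', ht2, ht3⟩ := hcontra hwmem
        exact hlast' t ht1' ht2 ht3
    have hcard' : {x : V | ∃ t, s' < t ∧ t ≤ 1 ∧ p t ∈ F x}.ncard ≤ n := by
      have := Set.ncard_lt_ncard hsub (Set.toFinite _)
      omega
    exact hadj.reachable.trans (ih w s' hs'1 hs'w hlast' hcard')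

theorem stmt5 {V : Type*} [Fintype V] [Nonempty V] (G : SimpleGraph V)
    (F : V → Set (ℝ × ℝ)) (hrep : IsVisRep G F)
    (hcpt : ∀ v, IsCompact (F v)) (hconn : ∀ v, IsConnected (F v)) :
    G.Connected := by
  rw [SimpleGraph.connected_iff]
  refine ⟨fun u v => ?_, ‹_›⟩
  obtain ⟨a, ha⟩ := hrep.nonempty u
  obtain ⟨b, hb⟩ := hrep.nonempty v
  set p : ℝ →ᵃ[ℝ] (ℝ × ℝ) := AffineMap.lineMap a b with hp
  have hpc : Continuous p := AffineMap.lineMap_continuous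
  have hp1 : p 1 ∈ F v := by simpa [hp] using hb
  have hp0 : p 0 ∈ F u := by simpa [hp] using ha
  -- last time in F u
  set B : Set ℝ := Icc 0 1 ∩ p ⁻¹' F u with hB
  have hBcpt : IsCompact B := isCompact_Icc.inter_right ((hcpt u).isClosed.preimage hpc)
  have hBne : B.Nonempty := ⟨0, ⟨le_refl _, zero_le_one⟩, hp0⟩
  set s := sSup B with hsdef
  have hs : s ∈ B := hBcpt.sSup_mem hBne
  obtain ⟨⟨hs0, hs1⟩, hsu⟩ := hs
  have hlast : ∀ t, s < t → t ≤ 1 → p t ∉ F u := fun t ht ht1 htu =>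
    absurd (le_csSup hBcpt.bddAbove ⟨⟨hs0.trans ht.le, ht1⟩, htu⟩) (not_le.mpr ht)
  refine vis_walk G F hrep hcpt v p hpc hp1 (Fintype.card V) u s hs1 hsu hlast ?_
  calc {x : V | ∃ t, s < t ∧ t ≤ 1 ∧ p t ∈ F x}.ncard
      ≤ (Set.univ : Set V).ncard := Set.ncard_le_ncard (Set.subset_univ _) (Set.toFinite _)
    _ = Fintype.card V := by simp [Set.ncard_univ]
end

section
/- Every finite tree is a compact visibility graph: for every finite tree T there exists a representation of T by disjoint nonempty compact connected subsets of R^2 in which two vertices are adjacent in T if and only if there is a segment between points of their regions intersecting no other region. -/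
open Set

open Set Metric

noncomputable section

structure Layout (V : Type*) where
  r : V
  par : V → V
  dep : V → ℕ
  xc : V → ℝ
  N : ℕ
  two_le_N : 2 ≤ N
  dep_r : dep r = 0
  dep_eq_zero : ∀ v, dep v = 0 → v = r
  dep_par : ∀ v, v ≠ r → dep (par v) + 1 = dep v
  xc_le : ∀ v, |xc v| ≤ 1/2
  xc_gap : ∀ u v, u ≠ v → 1 / N ≤ |xc u - xc v|

namespace Layout

variable {V : Type*} (L : Layout V)

def δ : ℝ := 1 / (8 * L.N)
def R (v : V) : ℝ := L.δ ^ L.dep v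
def c (v : V) : ℝ × ℝ :=
  ∑ j ∈ Finset.range (L.dep v), L.δ ^ (L.dep v - 1 - j) • ((L.xc (L.par^[j] v) : ℝ), (1/2 : ℝ))
def bp (u : V) : ℝ × ℝ := ((L.c u).1, (L.c u).2 - L.R u)
def H (v u : V) : Set (ℝ × ℝ) := sphere (L.c u) (L.R u) ∪ segment ℝ (L.c v) (L.bp u)
def child (u v : V) : Prop := u ≠ L.r ∧ L.par u = v
def F (v : V) : Set (ℝ × ℝ) := {L.c v} ∪ ⋃ (u : V) (_ : L.child u v), L.H v u
def desc (w v : V) : Prop := ∃ k, L.par^[k] w = v ∧ L.dep w = L.dep v + k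

variable {L}

lemma Npos : (0:ℝ) < L.N := by
  have := L.two_le_N; positivity

lemma δ_pos : 0 < L.δ := by
  have := Npos (L := L); rw [δ]; positivity

lemma Nδ : L.δ = 1/(8*L.N) := rfl

lemma invN_le : (1 : ℝ)/L.N ≤ 1/2 := by
  have h := L.two_le_N
  have : (2:ℝ) ≤ L.N := by exact_mod_cast h
  rw [div_le_div_iff₀ Npos (by norm_num)]; linarith

lemma δ_le : L.δ ≤ 1/16 := by
  have h := invN_le (L := L)
  have hN := Npos (L := L)
  rw [Nδ]
  rw [div_le_div_iff₀ (by positivity) (by norm_num)]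
  rw [div_le_div_iff₀ hN (by norm_num)] at h
  linarith

lemma R_pos (v : V) : 0 < L.R v := pow_pos δ_pos _

lemma dep_child {u v : V} (h : L.child u v) : L.dep u = L.dep v + 1 := by
  have := L.dep_par u h.1; rw [h.2] at this; omega

lemma R_child {u v : V} (h : L.child u v) : L.R u = L.δ * L.R v := by
  rw [R, R, dep_child h, pow_succ, mul_comm]

lemma c_rec {u : V} (hu : u ≠ L.r) :
    L.c u = L.c (L.par u) + L.R (L.par u) • ((L.xc u : ℝ), (1/2 : ℝ)) := by
  have hd : L.dep u = L.dep (L.par u) + 1 := ((L.dep_par u hu).symm)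
  have e1 : ∀ j ∈ Finset.range (L.dep (L.par u)),
      L.δ ^ (L.dep (L.par u) + 1 - 1 - (j+1)) • ((L.xc (L.par^[j+1] u) : ℝ), (1/2:ℝ))
        = L.δ ^ (L.dep (L.par u) - 1 - j) • ((L.xc (L.par^[j] (L.par u)) : ℝ), (1/2:ℝ)) := by
    intro j hj
    rw [Function.iterate_succ_apply]
    congr 2
    omega
  rw [c, hd, Finset.sum_range_succ', Finset.sum_congr rfl e1]
  rw [Function.iterate_zero_apply]
  have e2 : L.dep (L.par u) + 1 - 1 - 0 = L.dep (L.par u) := by omega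
  rw [e2, c, R]

lemma c_fst {u : V} (hu : u ≠ L.r) :
    (L.c u).1 = (L.c (L.par u)).1 + L.R (L.par u) * L.xc u := by
  rw [c_rec hu]; simp [smul_eq_mul]

lemma c_snd {u : V} (hu : u ≠ L.r) :
    (L.c u).2 = (L.c (L.par u)).2 + L.R (L.par u) / 2 := by
  rw [c_rec hu]; simp [smul_eq_mul]
  try ring

lemma dist_pair (q p : ℝ × ℝ) : dist q p = max |q.1 - p.1| |q.2 - p.2| := by
  rw [Prod.dist_eq, Real.dist_eq, Real.dist_eq]

lemma dist_fst_le (q p : ℝ × ℝ) : |q.1 - p.1| ≤ dist q p := by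
  rw [dist_pair]; exact le_max_left _ _

lemma dist_snd_le (q p : ℝ × ℝ) : |q.2 - p.2| ≤ dist q p := by
  rw [dist_pair]; exact le_max_right _ _

lemma dist_c_par {u : V} (hu : u ≠ L.r) :
    dist (L.c u) (L.c (L.par u)) ≤ L.R (L.par u) / 2 := by
  have h1 := c_fst hu
  have h2 := c_snd hu
  have hR := R_pos (L := L) (L.par u)
  have hx := L.xc_le u
  rw [dist_pair]
  rw [abs_le] at hx
  refine max_le ?_ ?_
  · rw [h1, abs_le]; constructor <;> nlinarith
  · rw [h2, abs_le]; constructor <;> nlinarith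


lemma snd_gap {u : V} (hu : u ≠ L.r) :
    (L.c u).2 - (L.c (L.par u)).2 = L.R (L.par u) / 2 := by
  rw [c_snd hu]; ring

lemma sib_fst_gap {u u' p : V} (hu : L.child u p) (hu' : L.child u' p) (hne : u ≠ u') :
    L.R p * (1/L.N) ≤ |(L.c u).1 - (L.c u').1| := by
  have h1 := c_fst hu.1
  have h2 := c_fst hu'.1
  rw [hu.2] at h1; rw [hu'.2] at h2
  have hg := L.xc_gap u u' hne
  have hR := R_pos (L := L) p
  rw [h1, h2]
  have : (L.c p).1 + L.R p * L.xc u - ((L.c p).1 + L.R p * L.xc u') = L.R p * (L.xc u - L.xc u') := by ring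
  rw [this, abs_mul, abs_of_pos hR]
  exact mul_le_mul_of_nonneg_left hg hR.le

lemma sib_snd_eq {u u' p : V} (hu : L.child u p) (hu' : L.child u' p) :
    (L.c u).2 = (L.c u').2 := by
  have h1 := c_snd hu.1
  have h2 := c_snd hu'.1
  rw [hu.2] at h1; rw [hu'.2] at h2
  rw [h1, h2]

lemma sib_gap {u u' p : V} (hu : L.child u p) (hu' : L.child u' p) (hne : u ≠ u') :
    L.R p * (1/L.N) ≤ dist (L.c u) (L.c u') :=
  le_trans (sib_fst_gap hu hu' hne) (dist_fst_le _ _)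

/-! ### desc API -/

lemma desc_refl (v : V) : L.desc v v := ⟨0, rfl, by omega⟩

lemma ne_r_of_dep_pos {v : V} (h : 0 < L.dep v) : v ≠ L.r := by
  intro hv; rw [hv, L.dep_r] at h; omega

lemma desc_root (w : V) : L.desc w L.r := by
  suffices h : ∀ n w, L.dep w = n → L.desc w L.r by exact h _ w rfl
  intro n
  induction n using Nat.strong_induction_on with
  | _ n IH =>
    intro w hw
    rcases Nat.eq_zero_or_pos n with h0 | hpos
    · rw [h0] at hw; rw [L.dep_eq_zero w hw]; exact desc_refl _
    · have hwr : w ≠ L.r := ne_r_of_dep_pos (hw ▸ hpos)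
      have hd := L.dep_par w hwr
      obtain ⟨k, hk, hdk⟩ := IH (L.dep (L.par w)) (by omega) (L.par w) rfl
      exact ⟨k + 1, by rw [Function.iterate_succ_apply]; exact hk, by rw [L.dep_r] at hdk ⊢; omega⟩

lemma not_desc_of_desc_ne {v u : V} (h : L.desc v u) (hne : v ≠ u) : ¬ L.desc u v := by
  obtain ⟨k, hk, hd⟩ := h
  rintro ⟨m, hm, hd'⟩
  have : k = 0 := by omega
  rw [this] at hk
  exact hne hk

lemma ne_r_of_desc_ne {v u : V} (h : L.desc v u) (hne : v ≠ u) : v ≠ L.r := by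
  obtain ⟨k, hk, hd⟩ := h
  have hk0 : k ≠ 0 := by rintro rfl; exact hne hk
  exact ne_r_of_dep_pos (by omega)

lemma desc_child_decomp {w v : V} (h : L.desc w v) (hne : w ≠ v) :
    ∃ u, L.child u v ∧ L.desc w u := by
  obtain ⟨k, hk, hd⟩ := h
  induction k generalizing w with
  | zero => exact absurd hk hne
  | succ k IH =>
    have hwr : w ≠ L.r := ne_r_of_dep_pos (by omega)
    have hdp := L.dep_par w hwr
    rcases Nat.eq_zero_or_pos k with h0 | hpos
    · subst h0
      exact ⟨w, ⟨hwr, hk⟩, desc_refl _⟩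
    · have hk' : L.par^[k] (L.par w) = v := by
        rw [← Function.iterate_succ_apply]; exact hk
      have hd' : L.dep (L.par w) = L.dep v + k := by omega
      have hne' : L.par w ≠ v := by
        intro h; rw [h] at hd'; omega
      obtain ⟨u, hu, m, hm, hdm⟩ := IH hne' hk' hd'
      exact ⟨u, hu, m + 1, by rw [Function.iterate_succ_apply]; exact hm, by omega⟩

/-! ### containment lemmas -/

lemma dist_c_desc : ∀ (k : ℕ) (w v : V), L.par^[k] w = v → L.dep w = L.dep v + k →
    dist (L.c w) (L.c v) ≤ (3/5) * (L.R v - L.R w) := by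
  intro k
  induction k with
  | zero =>
    intro w v hk hd
    rw [Function.iterate_zero_apply] at hk
    subst hk
    simp
  | succ k IH =>
    intro w v hk hd
    have hwr : w ≠ L.r := ne_r_of_dep_pos (by omega)
    have hdp := L.dep_par w hwr
    have h1 := IH (L.par w) v (by rw [← Function.iterate_succ_apply]; exact hk) (by omega)
    have h2 := dist_c_par hwr
    have h3 := dist_triangle (L.c w) (L.c (L.par w)) (L.c v)
    have hRw : L.R w = L.δ * L.R (L.par w) := R_child ⟨hwr, rfl⟩
    have hRp := R_pos (L := L) (L.par w)
    have hδ := δ_le (L := L)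
    have hδ0 := δ_pos (L := L)
    nlinarith

lemma mem_F_iff {v : V} {q : ℝ × ℝ} :
    q ∈ L.F v ↔ q = L.c v ∨ ∃ u, L.child u v ∧ q ∈ L.H v u := by
  simp [F, H]

lemma dist_bp {u : V} : dist (L.bp u) (L.c u) ≤ L.R u := by
  rw [dist_pair, bp]
  have hR := R_pos (L := L) u
  have e1 : ((L.c u).1, (L.c u).2 - L.R u).1 - (L.c u).1 = 0 := by simp
  have e2 : ((L.c u).1, (L.c u).2 - L.R u).2 - (L.c u).2 = -(L.R u) := by simp
  rw [e1, e2, abs_zero, abs_neg, abs_of_pos hR]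
  simp [hR.le]

lemma F_subset (v : V) : L.F v ⊆ closedBall (L.c v) ((3/5) * L.R v) := by
  intro q hq
  have hRv := R_pos (L := L) v
  have hδ := δ_le (L := L)
  have hδ0 := δ_pos (L := L)
  rw [mem_closedBall]
  rcases mem_F_iff.1 hq with rfl | ⟨u, hu, hH⟩
  · simp; positivity
  · have hRu : L.R u = L.δ * L.R v := R_child hu
    have hcd : dist (L.c u) (L.c v) ≤ L.R v / 2 := by
      have := dist_c_par hu.1; rw [hu.2] at this; exact this
    have hbp : dist (L.bp u) (L.c v) ≤ (3/5) * L.R v := by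
      have := dist_triangle (L.bp u) (L.c u) (L.c v)
      have := dist_bp (L := L) (u := u)
      nlinarith
    rcases hH with hs | hseg
    · rw [mem_sphere] at hs
      have := dist_triangle q (L.c u) (L.c v)
      nlinarith
    · have hsub : segment ℝ (L.c v) (L.bp u) ⊆ closedBall (L.c v) ((3/5) * L.R v) := by
        apply (convex_closedBall _ _).segment_subset
        · simp; positivity
        · rw [mem_closedBall]; exact hbp
      exact mem_closedBall.1 (hsub hseg)

lemma F_desc_subset {k : ℕ} {w v : V} (hk : L.par^[k] w = v) (hd : L.dep w = L.dep v + k) :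
    L.F w ⊆ closedBall (L.c v) ((3/5) * L.R v) := by
  intro q hq
  have h1 := mem_closedBall.1 (F_subset w hq)
  have h2 := dist_c_desc k w v hk hd
  have h3 := dist_triangle q (L.c w) (L.c v)
  have hRw := R_pos (L := L) w
  rw [mem_closedBall]
  linarith


lemma seg_mem {a b q : ℝ × ℝ} (h : q ∈ segment ℝ a b) :
    ∃ t : ℝ, 0 ≤ t ∧ t ≤ 1 ∧ q.1 = (1-t)*a.1 + t*b.1 ∧ q.2 = (1-t)*a.2 + t*b.2 := by
  rw [segment_eq_image] at h
  obtain ⟨t, ht, rfl⟩ := h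
  refine ⟨t, ht.1, ht.2, ?_, ?_⟩ <;> simp [Prod.smul_def, smul_eq_mul]

lemma main_sep : ∀ (n : ℕ) (u : V), L.dep u = n → u ≠ L.r → ∀ w, ¬ L.desc w u →
    ∀ q ∈ L.F w, (L.R u ≤ dist q (L.c u)) ∧ (w ≠ L.par u → L.R u < dist q (L.c u)) := by
  intro n
  induction n using Nat.strong_induction_on with
  | _ n IH =>
  intro u hdep hur w hw q hq
  have hcu : L.child u (L.par u) := ⟨hur, rfl⟩
  have hdp : L.dep (L.par u) + 1 = L.dep u := L.dep_par u hur
  have hRu : L.R u = L.δ * L.R (L.par u) := R_child hcu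
  have hRp := R_pos (L := L) (L.par u)
  have hδ0 := δ_pos (L := L)
  have hδ := δ_le (L := L)
  have hNne : (L.N : ℝ) ≠ 0 := (Npos (L := L)).ne'
  have hN0 : (0:ℝ) < 1 / L.N := by have := Npos (L := L); positivity
  have hN2 := invN_le (L := L)
  have hδN : L.δ = (1 / L.N) / 8 := by rw [Nδ]; ring
  have hRuX : L.R u = (1/L.N) * L.R (L.par u) / 8 := by rw [hRu, hδN]; ring
  have hXpos : 0 < (1/L.N) * L.R (L.par u) := by positivity
  have hhalf : L.R u ≤ L.R (L.par u) / 2 := by nlinarith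
  have hsnd : (L.c u).2 = (L.c (L.par u)).2 + L.R (L.par u) / 2 := c_snd hur
  by_cases hwp : w = L.par u
  · rcases mem_F_iff.1 (hwp ▸ hq) with rfl | ⟨u', hu', hH⟩
    · refine ⟨?_, fun hh => absurd hwp hh⟩
      have h2 : |(L.c (L.par u)).2 - (L.c u).2| = L.R (L.par u) / 2 := by
        rw [abs_of_nonpos (by linarith), neg_sub]; linarith
      have := dist_snd_le (L.c (L.par u)) (L.c u)
      nlinarith
    · refine ⟨?_, fun hh => absurd hwp hh⟩
      by_cases huu : u' = u
      · rw [huu] at hH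
        rcases hH with hs | hseg
        · rw [mem_sphere] at hs; exact le_of_eq hs.symm
        · obtain ⟨t, ht0, ht1, hq1, hq2⟩ := seg_mem hseg
          rw [bp] at hq2
          simp only [] at hq2
          have hgap : (L.c u).2 - q.2 = (1-t) * (L.R (L.par u)) / 2 + t * L.R u := by
            rw [hq2, hsnd]; ring
          have h2 : L.R u ≤ (L.c u).2 - q.2 := by
            nlinarith [mul_nonneg (sub_nonneg.2 ht1) (sub_nonneg.2 hhalf)]
          have h3 := dist_snd_le q (L.c u)
          rw [abs_sub_comm] at h3
          have := le_abs_self ((L.c u).2 - q.2)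
          linarith
      · have hRu' : L.R u' = L.δ * L.R (L.par u) := R_child hu'
        have hRuX' : L.R u' = (1/L.N) * L.R (L.par u) / 8 := by rw [hRu', hδN]; ring
        have hsnd' : (L.c u').2 = (L.c (L.par u)).2 + L.R (L.par u) / 2 := by
          have := c_snd hu'.1; rw [hu'.2] at this; exact this
        have hfst' : (L.c u').1 = (L.c (L.par u)).1 + L.R (L.par u) * L.xc u' := by
          have := c_fst hu'.1; rw [hu'.2] at this; exact this
        rcases hH with hs | hseg
        · rw [mem_sphere] at hs
          have ht := dist_triangle (L.c u) q (L.c u')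
          have h1 : L.R (L.par u) * (1 / L.N) ≤ dist (L.c u) (L.c u') :=
            sib_gap hcu hu' (fun h => huu h.symm)
          have h3 : dist (L.c u) q = dist q (L.c u) := dist_comm _ _
          nlinarith
        · obtain ⟨t, ht0, ht1, hq1, hq2⟩ := seg_mem hseg
          rw [bp] at hq1 hq2
          simp only [] at hq1 hq2
          by_cases htN : 1 / L.N ≤ 1 - t
          · have hgap : (L.c u).2 - q.2 = (1-t) * (L.R (L.par u)) / 2 + t * L.R u' := by
              rw [hq2, hsnd', hsnd]; ring
            have k1 : (1/L.N) * L.R (L.par u) ≤ (1-t) * L.R (L.par u) :=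
              mul_le_mul_of_nonneg_right htN hRp.le
            have k2 : 0 ≤ t * L.R u' := mul_nonneg ht0 (R_pos (L := L) u').le
            have h2 : L.R u ≤ (L.c u).2 - q.2 := by linarith
            have h3 := dist_snd_le q (L.c u)
            rw [abs_sub_comm] at h3
            have := le_abs_self ((L.c u).2 - q.2)
            linarith
          · push_neg at htN
            have hfst : (L.c u).1 = (L.c (L.par u)).1 + L.R (L.par u) * L.xc u := c_fst hur
            have hgap : (L.c u).1 - q.1 = L.R (L.par u) * (L.xc u - t * L.xc u') := by
              rw [hq1, hfst', hfst]; ring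
            have hxa : |L.xc u - L.xc u'| ≤ |L.xc u - t * L.xc u'| + |(1-t) * L.xc u'| := by
              have e : L.xc u - L.xc u' = (L.xc u - t * L.xc u') - ((1-t) * L.xc u') := by ring
              rw [e]; exact abs_sub _ _
            have hxb : |(1-t) * L.xc u'| ≤ (1-t) * (1/2) := by
              rw [abs_mul, abs_of_nonneg (by linarith : (0:ℝ) ≤ 1 - t)]
              exact mul_le_mul_of_nonneg_left (L.xc_le u') (by linarith)
            have hxg := L.xc_gap u u' (fun h => huu h.symm)
            have hx1 : (1/L.N)/2 ≤ |L.xc u - t * L.xc u'| := by linarith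
            have h3 := dist_fst_le q (L.c u)
            rw [abs_sub_comm, hgap, abs_mul, abs_of_pos hRp] at h3
            have k3 : L.R (L.par u) * ((1/L.N)/2) ≤ L.R (L.par u) * |L.xc u - t * L.xc u'| :=
              mul_le_mul_of_nonneg_left hx1 hRp.le
            linarith
  · by_cases hdw : L.desc w (L.par u)
    · obtain ⟨u', hu', hdesc'⟩ := desc_child_decomp hdw hwp
      have huu : u' ≠ u := by rintro rfl; exact hw hdesc'
      obtain ⟨k, hk, hd⟩ := hdesc'
      have hball := mem_closedBall.1 (F_desc_subset hk hd hq)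
      have hRu' : L.R u' = L.δ * L.R (L.par u) := R_child hu'
      have hRuX' : L.R u' = (1/L.N) * L.R (L.par u) / 8 := by rw [hRu', hδN]; ring
      have hgap : L.R (L.par u) * (1 / L.N) ≤ dist (L.c u) (L.c u') :=
        sib_gap hcu hu' (Ne.symm huu)
      have ht := dist_triangle (L.c u) q (L.c u')
      have h3 : dist (L.c u) q = dist q (L.c u) := dist_comm _ _
      have h4 : dist q (L.c u') = dist (L.c u') q := dist_comm _ _
      have hstrict : L.R u < dist q (L.c u) := by nlinarith
      exact ⟨hstrict.le, fun _ => hstrict⟩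
    · have hpr : L.par u ≠ L.r := fun h => hdw (h ▸ desc_root w)
      have hIH := (IH (L.dep (L.par u)) (by omega) (L.par u) rfl hpr w hdw q hq).1
      have ht := dist_triangle q (L.c u) (L.c (L.par u))
      have h2 : dist (L.c u) (L.c (L.par u)) ≤ L.R (L.par u) / 2 := dist_c_par hur
      have hstrict : L.R u < dist q (L.c u) := by nlinarith
      exact ⟨hstrict.le, fun _ => hstrict⟩


lemma c_mem_F (v : V) : L.c v ∈ L.F v := mem_F_iff.2 (Or.inl rfl)

lemma bp_mem_sphere (u : V) : L.bp u ∈ sphere (L.c u) (L.R u) := by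
  rw [mem_sphere, dist_pair, bp]
  have hR := R_pos (L := L) u
  have e1 : ((L.c u).1, (L.c u).2 - L.R u).1 - (L.c u).1 = 0 := by simp
  have e2 : ((L.c u).1, (L.c u).2 - L.R u).2 - (L.c u).2 = -(L.R u) := by simp
  rw [e1, e2, abs_zero, abs_neg, abs_of_pos hR]
  simp [hR.le]

lemma sphere_subset_F {u : V} (hu : u ≠ L.r) :
    sphere (L.c u) (L.R u) ⊆ L.F (L.par u) := fun q hq =>
  mem_F_iff.2 (Or.inr ⟨u, ⟨hu, rfl⟩, Or.inl hq⟩)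

lemma par_ne {u : V} (hu : u ≠ L.r) : L.par u ≠ u := by
  have := L.dep_par u hu
  intro h; rw [h] at this; omega

lemma edge_seg {u : V} (hu : u ≠ L.r) : ∀ w, w ≠ u → w ≠ L.par u →
    segment ℝ (L.c u) (L.bp u) ∩ L.F w = ∅ := by
  intro w hw1 hw2
  rw [eq_empty_iff_forall_notMem]
  rintro q ⟨hqs, hqF⟩
  have hRu := R_pos (L := L) u
  have hδ0 := δ_pos (L := L)
  have hδ := δ_le (L := L)
  obtain ⟨t, ht0, ht1, hq1, hq2⟩ := seg_mem hqs
  rw [bp] at hq1 hq2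
  simp only [] at hq1 hq2
  have hq1' : q.1 = (L.c u).1 := by rw [hq1]; ring
  have hq2' : q.2 = (L.c u).2 - t * L.R u := by rw [hq2]; ring
  by_cases hdw : L.desc w u
  · obtain ⟨u'', hu'', hdesc⟩ := desc_child_decomp hdw hw1
    obtain ⟨k, hk, hd⟩ := hdesc
    have hball := mem_closedBall.1 (F_desc_subset hk hd hqF)
    have hRu'' : L.R u'' = L.δ * L.R u := R_child hu''
    have hsnd'' : (L.c u'').2 = (L.c u).2 + L.R u / 2 := by
      have := c_snd hu''.1; rw [hu''.2] at this; exact this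
    have hgap : (L.c u'').2 - q.2 = L.R u / 2 + t * L.R u := by
      rw [hq2', hsnd'']; ring
    have h3 := dist_snd_le q (L.c u'')
    rw [abs_sub_comm] at h3
    have h4 := le_abs_self ((L.c u'').2 - q.2)
    nlinarith [mul_nonneg ht0 hRu.le]
  · have hm := (main_sep (L.dep u) u rfl hu w hdw q hqF).2 hw2
    have hdq : dist q (L.c u) ≤ L.R u := by
      rw [dist_pair, hq1', hq2']
      have e1 : (L.c u).1 - (L.c u).1 = 0 := by ring
      have e2 : (L.c u).2 - t * L.R u - (L.c u).2 = -(t * L.R u) := by ring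
      rw [e1, e2, abs_zero, abs_neg]
      rw [abs_of_nonneg (mul_nonneg ht0 hRu.le)]
      have : t * L.R u ≤ L.R u := by nlinarith
      simp [this, hRu.le]
    linarith

lemma block_core {z o : V} (hz : z ≠ L.r) (ho : ¬ L.desc o z) (hpo : L.par z ≠ o)
    {a b : ℝ × ℝ} (ha : a ∈ L.F z) (hb : b ∈ L.F o) :
    ∃ q ∈ segment ℝ a b, q ∈ L.F (L.par z) := by
  have hRz := R_pos (L := L) z
  have hga : dist a (L.c z) < L.R z := by
    have := mem_closedBall.1 (F_subset z ha); linarith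
  have hgb : L.R z < dist b (L.c z) :=
    (main_sep (L.dep z) z rfl hz o ho b hb).2 (fun h => hpo h.symm)
  have hcont : ContinuousOn (fun t : ℝ => dist (a + t • (b - a)) (L.c z)) (Icc 0 1) := by
    apply Continuous.continuousOn
    exact (continuous_const.add (continuous_id.smul continuous_const)).dist continuous_const
  have hIVT := intermediate_value_Icc (zero_le_one) hcont
  have hmem : L.R z ∈ Icc (dist (a + (0:ℝ) • (b - a)) (L.c z)) (dist (a + (1:ℝ) • (b - a)) (L.c z)) := by
    rw [one_smul]
    constructor
    · have : a + (0:ℝ) • (b - a) = a := by rw [zero_smul, add_zero]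
      rw [this]
      exact hga.le
    · have : a + (b - a) = b := by abel
      rw [this]
      exact hgb.le
  obtain ⟨t, ht, hgt⟩ := hIVT hmem
  refine ⟨a + t • (b - a), ?_, ?_⟩
  · rw [segment_eq_image']
    exact ⟨t, ht, rfl⟩
  · exact sphere_subset_F hz (mem_sphere.2 hgt)

lemma choose_zo {u v : V} (hne : u ≠ v) :
    ∃ z o, ((z = u ∧ o = v) ∨ (z = v ∧ o = u)) ∧ z ≠ L.r ∧ ¬ L.desc o z := by
  by_cases hd : L.desc v u
  · exact ⟨v, u, Or.inr ⟨rfl, rfl⟩, ne_r_of_desc_ne hd (Ne.symm hne),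
      not_desc_of_desc_ne hd (Ne.symm hne)⟩
  · refine ⟨u, v, Or.inl ⟨rfl, rfl⟩, ?_, hd⟩
    rintro rfl
    exact hd (desc_root v)

lemma F_disj {u v : V} (hne : u ≠ v) : Disjoint (L.F u) (L.F v) := by
  obtain ⟨z, o, hzo, hz, ho⟩ := choose_zo hne
  have key : Disjoint (L.F z) (L.F o) := by
    rw [Set.disjoint_left]
    intro q hq1 hq2
    have h1 := mem_closedBall.1 (F_subset z hq1)
    have h2 := (main_sep (L.dep z) z rfl hz o ho q hq2).1
    have := R_pos (L := L) z
    linarith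
  rcases hzo with ⟨rfl, rfl⟩ | ⟨rfl, rfl⟩
  · exact key
  · exact key.symm

lemma no_sight {u v : V} (hne : u ≠ v) (h1 : ¬ L.child u v) (h2 : ¬ L.child v u) :
    ¬ Sightline L.F u v := by
  rintro ⟨a, ha, b, hb, hseg⟩
  obtain ⟨z, o, hzo, hz, ho⟩ := choose_zo hne
  have hpo : L.par z ≠ o := by
    rcases hzo with ⟨rfl, rfl⟩ | ⟨rfl, rfl⟩
    · exact fun h => h1 ⟨hz, h⟩
    · exact fun h => h2 ⟨hz, h⟩
  have hpz : L.par z ≠ z := par_ne hz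
  rcases hzo with ⟨rfl, rfl⟩ | ⟨rfl, rfl⟩
  · obtain ⟨q, hqs, hqF⟩ := block_core hz ho hpo ha hb
    have := hseg (L.par z) hpz hpo
    rw [eq_empty_iff_forall_notMem] at this
    exact this q ⟨hqs, hqF⟩
  · obtain ⟨q, hqs, hqF⟩ := block_core hz ho hpo hb ha
    have := hseg (L.par z) hpo hpz
    rw [eq_empty_iff_forall_notMem] at this
    rw [segment_symm] at hqs
    exact this q ⟨hqs, hqF⟩

lemma sight_child {u v : V} (h : L.child u v) : Sightline L.F u v := by
  refine ⟨L.c u, c_mem_F u, L.bp u, ?_, ?_⟩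
  · rw [← h.2]
    exact sphere_subset_F h.1 (bp_mem_sphere u)
  · intro w hw1 hw2
    exact edge_seg h.1 w hw1 (by rw [h.2]; exact hw2)

lemma sight_child' {u v : V} (h : L.child v u) : Sightline L.F u v := by
  refine ⟨L.bp v, ?_, L.c v, c_mem_F v, ?_⟩
  · rw [← h.2]
    exact sphere_subset_F h.1 (bp_mem_sphere v)
  · intro w hw1 hw2
    rw [segment_symm]
    exact edge_seg h.1 w hw2 (by rw [h.2]; exact hw1)

lemma seg_compact (a b : ℝ × ℝ) : IsCompact (segment ℝ a b) := by
  rw [segment_eq_image]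
  exact isCompact_Icc.image (by continuity)

lemma F_compact [Fintype V] (v : V) : IsCompact (L.F v) := by
  rw [F]
  apply IsCompact.union isCompact_singleton
  apply isCompact_iUnion
  intro u
  apply isCompact_iUnion
  intro _
  exact (isCompact_sphere _ _).union (seg_compact _ _)

lemma rank_two : 1 < Module.rank ℝ (ℝ × ℝ) := by
  rw [rank_prod', Module.rank_self]
  norm_num

lemma H_preconn {v u : V} : IsPreconnected (L.H v u) := by
  apply IsPreconnected.union (L.bp u) (bp_mem_sphere u) (right_mem_segment ℝ _ _)
  · exact isPreconnected_sphere rank_two _ _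
  · exact (convex_segment _ _).isPreconnected

lemma F_conn (v : V) : IsConnected (L.F v) := by
  have hne : Nonempty V := ⟨L.r⟩
  have hFeq : L.F v = ⋃ (u : V), ({L.c v} ∪ ⋃ (_ : L.child u v), L.H v u) := by
    rw [F, Set.union_iUnion]
  rw [hFeq]
  refine ⟨⟨L.c v, mem_iUnion.2 ⟨L.r, Or.inl rfl⟩⟩, ?_⟩
  apply isPreconnected_iUnion
  · exact ⟨L.c v, mem_iInter.2 fun u => Or.inl rfl⟩
  · intro u
    by_cases h : L.child u v
    · have e : ({L.c v} : Set (ℝ × ℝ)) ∪ ⋃ (_ : L.child u v), L.H v u = {L.c v} ∪ L.H v u := by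
        simp [h]
      rw [e]
      have hsub : ({L.c v} : Set (ℝ × ℝ)) ⊆ L.H v u := by
        rw [singleton_subset_iff]
        exact Or.inr (left_mem_segment ℝ _ _)
      rw [union_eq_self_of_subset_left hsub]
      exact H_preconn
    · have e : ({L.c v} : Set (ℝ × ℝ)) ∪ ⋃ (_ : L.child u v), L.H v u = {L.c v} := by
        simp [h]
      rw [e]
      exact isPreconnected_singleton

end Layout


open SimpleGraph in
lemma tree_layout_exists {V : Type*} (T : SimpleGraph V) (hT : T.IsTree) :
    ∃ (r : V) (par : V → V) (dep : V → ℕ),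
      dep r = 0 ∧ (∀ v, dep v = 0 → v = r) ∧ (∀ v, v ≠ r → dep (par v) + 1 = dep v) ∧
      (∀ u v, T.Adj u v ↔ ((u ≠ r ∧ par u = v) ∨ (v ≠ r ∧ par v = u))) := by
  classical
  have hne : Nonempty V := hT.isConnected.nonempty
  set r : V := Classical.arbitrary V with hr
  have hEU := hT.existsUnique_path
  let P : ∀ v, T.Walk v r := fun v => (hEU v r).choose
  have hP : ∀ v, (P v).IsPath := fun v => (hEU v r).choose_spec.1
  have hPu : ∀ v (q : T.Walk v r), q.IsPath → q = P v := fun v q hq =>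
    ((hEU v r).choose_spec.2 q hq).trans rfl
  let par : V → V := fun v => (P v).getVert 1
  let dep : V → ℕ := fun v => (P v).length
  have hnil : (Walk.nil : T.Walk r r) = P r := hPu r Walk.nil Walk.IsPath.nil
  have hdepr : dep r = 0 := by
    show (P r).length = 0
    rw [← hnil, Walk.length_nil]
  have key1 : ∀ v, v ≠ r → T.Adj v (par v) ∧ dep (par v) + 1 = dep v := by
    intro v hv
    obtain ⟨x, h, q, hPv⟩ := Walk.exists_eq_cons_of_ne hv (P v)
    have hx : par v = x := by
      show (P v).getVert 1 = x
      rw [hPv, Walk.getVert_cons_succ, Walk.getVert_zero]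
    have hqpath : q.IsPath := by
      have := hP v
      rw [hPv] at this
      exact this.of_cons
    have hq' : q = P x := hPu x q hqpath
    constructor
    · rw [hx]; exact h
    · show (P (par v)).length + 1 = (P v).length
      rw [hx, ← hq', hPv]
      simp [Walk.length_cons]
  have key0 : ∀ v, dep v = 0 → v = r := by
    intro v hv
    by_contra hvr
    have := (key1 v hvr).2
    omega
  refine ⟨r, par, dep, hdepr, key0, fun v hv => (key1 v hv).2, ?_⟩
  intro u v
  constructor
  · intro h
    by_cases hu : u = r
    · subst hu
      refine Or.inr ⟨h.ne', ?_⟩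
      have hp1 : (Walk.cons h.symm Walk.nil : T.Walk v r).IsPath := by
        rw [Walk.cons_isPath_iff]
        exact ⟨Walk.IsPath.nil, by simp [h.ne']⟩
      have hPv := hPu v _ hp1
      show (P v).getVert 1 = r
      rw [← hPv, Walk.getVert_cons_succ, Walk.getVert_zero]
    · by_cases hv : v = r
      · subst hv
        refine Or.inl ⟨hu, ?_⟩
        have hp1 : (Walk.cons h Walk.nil : T.Walk u r).IsPath := by
          rw [Walk.cons_isPath_iff]
          exact ⟨Walk.IsPath.nil, by simp [h.ne]⟩
        have hPv := hPu u _ hp1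
        show (P u).getVert 1 = r
        rw [← hPv, Walk.getVert_cons_succ, Walk.getVert_zero]
      · by_cases hvp : v ∈ (P u).support
        · refine Or.inl ⟨hu, ?_⟩
          have htake : ((P u).takeUntil v hvp).IsPath := (hP u).takeUntil hvp
          have hs : (Walk.cons h Walk.nil : T.Walk u v).IsPath := by
            rw [Walk.cons_isPath_iff]
            exact ⟨Walk.IsPath.nil, by simp [h.ne]⟩
          obtain ⟨pp, hpp, huniq⟩ := hEU u v
          have hts : (P u).takeUntil v hvp = Walk.cons h Walk.nil :=
            (huniq _ htake).trans (huniq _ hs).symm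
          have hspec := Walk.take_spec (P u) hvp
          rw [hts] at hspec
          rw [Walk.cons_append, Walk.nil_append] at hspec
          show (P u).getVert 1 = v
          rw [← hspec, Walk.getVert_cons_succ, Walk.getVert_zero]
        · refine Or.inr ⟨hv, ?_⟩
          have hp1 : (Walk.cons h.symm (P u) : T.Walk v r).IsPath := by
            rw [Walk.cons_isPath_iff]
            exact ⟨hP u, hvp⟩
          have hPv := hPu v _ hp1
          show (P v).getVert 1 = u
          rw [← hPv, Walk.getVert_cons_succ, Walk.getVert_zero]
  · rintro (⟨hu, hp⟩ | ⟨hv, hp⟩)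
    · have := (key1 u hu).1
      rw [hp] at this
      exact this
    · have := (key1 v hv).1
      rw [hp] at this
      exact this.symm


theorem stmt10 {V : Type*} [Fintype V] (T : SimpleGraph V) (hT : T.IsTree) :
    ∃ F : V → Set (ℝ × ℝ), IsVisRep T F ∧ (∀ v, IsCompact (F v)) ∧ ∀ v, IsConnected (F v) := by
  classical
  obtain ⟨r, par, dep, h0, h1, h2, h3⟩ := tree_layout_exists T hT
  let n := Fintype.card V
  let e := Fintype.equivFin V
  let N : ℕ := n + 2
  let xc : V → ℝ := fun v => (((e v : ℕ) : ℝ) + 1) / (N : ℝ) - 1/2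
  have hNpos : (0:ℝ) < (N : ℝ) := by
    have : 0 < N := by omega
    exact_mod_cast this
  have hxcv : ∀ v, xc v = (((e v : ℕ) : ℝ) + 1) / (N : ℝ) - 1/2 := fun v => rfl
  have hxc_le : ∀ v, |xc v| ≤ 1/2 := by
    intro v
    have hlt : ((e v : ℕ) : ℝ) + 1 ≤ (N : ℝ) := by
      have hv := (e v).2
      have : (e v : ℕ) + 1 ≤ N := by omega
      exact_mod_cast this
    have h0' : (0:ℝ) ≤ ((e v : ℕ) : ℝ) + 1 := by positivity
    rw [hxcv, abs_le]
    constructor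
    · have : (0:ℝ) ≤ (((e v : ℕ) : ℝ) + 1) / (N : ℝ) := div_nonneg h0' hNpos.le
      linarith
    · have : (((e v : ℕ) : ℝ) + 1) / (N : ℝ) ≤ 1 := by
        rw [div_le_one hNpos]; exact hlt
      linarith
  have hxc_gap : ∀ u v, u ≠ v → 1/(N:ℝ) ≤ |xc u - xc v| := by
    intro u v hne
    have hne' : ((e u : ℕ) : ℤ) ≠ ((e v : ℕ) : ℤ) := by
      intro h
      apply hne
      apply e.injective
      apply Fin.val_injective
      exact_mod_cast h
    have h2' := Int.one_le_abs (sub_ne_zero.2 hne')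
    have h3' : (1:ℝ) ≤ |((e u : ℕ) : ℝ) - ((e v : ℕ) : ℝ)| := by
      have : ((|((e u : ℕ) : ℤ) - ((e v : ℕ) : ℤ)| : ℤ) : ℝ) = |((e u : ℕ) : ℝ) - ((e v : ℕ) : ℝ)| := by
        push_cast [Int.cast_abs]
        ring_nf
      rw [← this]
      exact_mod_cast h2'
    have heq : xc u - xc v = (((e u : ℕ) : ℝ) - ((e v : ℕ) : ℝ)) / (N : ℝ) := by
      rw [hxcv, hxcv]; ring
    rw [heq, abs_div, abs_of_pos hNpos]
    gcongr
  have hN2 : 2 ≤ N := by omega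
  let L : Layout V := ⟨r, par, dep, xc, N, hN2, h0, h1, h2, hxc_le, hxc_gap⟩
  have hadj : ∀ u v, T.Adj u v ↔ (L.child u v ∨ L.child v u) := fun u v => h3 u v
  refine ⟨L.F, ⟨fun v => ⟨L.c v, Layout.c_mem_F _⟩, fun u v h => Layout.F_disj h, ?_⟩,
    fun v => Layout.F_compact v, fun v => Layout.F_conn v⟩
  intro u v hne
  rw [hadj u v]
  constructor
  · rintro (h | h)
    · exact Layout.sight_child h
    · exact Layout.sight_child' h
  · intro hs
    by_contra hnc
    rw [not_or] at hnc
    exact Layout.no_sight hne hnc.1 hnc.2 hs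
end
end

section
/- For every n ≥ 1, the complete tripartite graph K_{1,1,n} is a compact visibility graph. -/
open Set

/-- The complete tripartite graph `K_{1,1,n}`: the two left vertices are adjacent to
everything else, the `n` right vertices are pairwise non-adjacent. -/
def K11n (n : ℕ) : SimpleGraph (Fin 2 ⊕ Fin n) :=
  SimpleGraph.fromRel (fun a _ => a.isLeft = true)

namespace Stmt12Aux

/-- The regions: a parabola arc, a horizontal base segment, and `n` points on
the parabola `y = x^2`. -/
def myF (n : ℕ) : (Fin 2 ⊕ Fin n) → Set (ℝ × ℝ) :=
  fun v => match v with
  | Sum.inl i =>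
      if i = 0 then (fun x : ℝ => (x, x^2 + 1/4)) '' Set.Icc 0 ((n:ℝ)-1)
      else (fun x : ℝ => (x, (-1:ℝ))) '' Set.Icc (-1) ((n:ℝ)-1)
  | Sum.inr i => {((i.val:ℝ), (i.val:ℝ)^2)}

lemma F0_eq (n : ℕ) :
    myF n (Sum.inl 0) = (fun x : ℝ => (x, x^2 + 1/4)) '' Set.Icc 0 ((n:ℝ)-1) := rfl

lemma F1_eq (n : ℕ) :
    myF n (Sum.inl 1) = (fun x : ℝ => (x, (-1:ℝ))) '' Set.Icc (-1) ((n:ℝ)-1) := rfl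

lemma Fw_eq (n : ℕ) (i : Fin n) :
    myF n (Sum.inr i) = {((i.val:ℝ), (i.val:ℝ)^2)} := rfl

lemma seg_mem {a b p : ℝ × ℝ} (h : p ∈ segment ℝ a b) :
    ∃ t : ℝ, 0 ≤ t ∧ t ≤ 1 ∧ p.1 = (1-t)*a.1 + t*b.1 ∧ p.2 = (1-t)*a.2 + t*b.2 := by
  rw [segment_eq_image] at h
  rcases h with ⟨t, ht, rfl⟩
  exact ⟨t, ht.1, ht.2, by simp, by simp⟩

lemma seg_mem' (a b : ℝ × ℝ) {t : ℝ} (h0 : 0 ≤ t) (h1 : t ≤ 1) :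
    ((1-t)*a.1 + t*b.1, (1-t)*a.2 + t*b.2) ∈ segment ℝ a b := by
  rw [segment_eq_image]
  refine ⟨t, ⟨h0, h1⟩, ?_⟩
  simp [Prod.ext_iff]

lemma sightline_symm {V : Type*} {F : V → Set (ℝ × ℝ)} {u v : V}
    (h : Sightline F u v) : Sightline F v u := by
  obtain ⟨a, ha, b, hb, hseg⟩ := h
  exact ⟨b, hb, a, ha, fun w hwv hwu => by rw [segment_symm]; exact hseg w hwu hwv⟩

lemma fin_cast_ne {n : ℕ} {i j : Fin n} (h : i ≠ j) : (i.val : ℝ) ≠ (j.val : ℝ) := by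
  simp only [ne_eq, Nat.cast_inj]
  exact fun hv => h (Fin.ext hv)

lemma fin_cast_le {n : ℕ} (i : Fin n) : (i.val : ℝ) ≤ (n : ℝ) - 1 := by
  have h := i.isLt
  have : (i.val : ℝ) + 1 ≤ (n : ℝ) := by exact_mod_cast h
  linarith

end Stmt12Aux

open Stmt12Aux in
theorem stmt12 (n : ℕ) (hn : 1 ≤ n) :
    ∃ F : (Fin 2 ⊕ Fin n) → Set (ℝ × ℝ), IsVisRep (K11n n) F ∧
      (∀ v, IsCompact (F v)) ∧ ∀ v, IsConnected (F v) := by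
  have hn1 : (0:ℝ) ≤ (n:ℝ) - 1 := by
    have : (1:ℝ) ≤ (n:ℝ) := by exact_mod_cast hn
    linarith
  -- the three sightlines
  have S01 : Sightline (myF n) (Sum.inl 0) (Sum.inl 1) := by
    refine ⟨(0, 1/4), ?_, (-1, -1), ?_, ?_⟩
    · rw [F0_eq]; exact ⟨0, ⟨le_refl _, hn1⟩, by norm_num⟩
    · rw [F1_eq]; exact ⟨-1, ⟨le_refl _, by linarith⟩, rfl⟩
    · rintro (j | k) hw1 hw2
      · exfalso
        fin_cases j
        · exact hw1 rfl
        · exact hw2 rfl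
      · rw [Set.eq_empty_iff_forall_notMem]
        rintro p ⟨hp, hpk⟩
        rw [Fw_eq, Set.mem_singleton_iff] at hpk
        obtain ⟨t, ht0, ht1, h1, h2⟩ := seg_mem hp
        rw [hpk] at h1 h2
        simp only at h1 h2
        have hk0 : (0:ℝ) ≤ (k.val : ℝ) := Nat.cast_nonneg _
        nlinarith [h1, h2]
  have S0w : ∀ k : Fin n, Sightline (myF n) (Sum.inl 0) (Sum.inr k) := by
    intro k
    have hk0 : (0:ℝ) ≤ (k.val : ℝ) := Nat.cast_nonneg _
    refine ⟨((k.val:ℝ), (k.val:ℝ)^2 + 1/4), ?_, ((k.val:ℝ), (k.val:ℝ)^2), ?_, ?_⟩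
    · rw [F0_eq]; exact ⟨(k.val:ℝ), ⟨hk0, fin_cast_le k⟩, rfl⟩
    · rw [Fw_eq]; rfl
    · rintro (j | m) hw1 hw2
      · -- j must be 1
        have hj : j = 1 := by
          fin_cases j
          · exact absurd rfl hw1
          · rfl
        subst hj
        rw [Set.eq_empty_iff_forall_notMem]
        rintro p ⟨hp, hpF⟩
        rw [F1_eq] at hpF
        obtain ⟨x, _, hxe⟩ := hpF
        obtain ⟨t, ht0, ht1, h1, h2⟩ := seg_mem hp
        have hp2 : p.2 = -1 := by rw [← hxe]
        simp only at h1 h2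
        nlinarith [h2, hp2]
      · -- m ≠ k
        have hmk : m ≠ k := fun h => hw2 (by rw [h])
        rw [Set.eq_empty_iff_forall_notMem]
        rintro p ⟨hp, hpk⟩
        rw [Fw_eq, Set.mem_singleton_iff] at hpk
        obtain ⟨t, ht0, ht1, h1, h2⟩ := seg_mem hp
        rw [hpk] at h1
        simp only at h1
        have : (m.val:ℝ) = (k.val:ℝ) := by linarith [h1]
        exact fin_cast_ne hmk this
  have S1w : ∀ k : Fin n, Sightline (myF n) (Sum.inl 1) (Sum.inr k) := by
    intro k
    have hk0 : (0:ℝ) ≤ (k.val : ℝ) := Nat.cast_nonneg _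
    refine ⟨((k.val:ℝ), -1), ?_, ((k.val:ℝ), (k.val:ℝ)^2), ?_, ?_⟩
    · rw [F1_eq]; exact ⟨(k.val:ℝ), ⟨by linarith, fin_cast_le k⟩, rfl⟩
    · rw [Fw_eq]; rfl
    · rintro (j | m) hw1 hw2
      · have hj : j = 0 := by
          fin_cases j
          · rfl
          · exact absurd rfl hw1
        subst hj
        rw [Set.eq_empty_iff_forall_notMem]
        rintro p ⟨hp, hpF⟩
        rw [F0_eq] at hpF
        obtain ⟨x, _, hxe⟩ := hpF
        obtain ⟨t, ht0, ht1, h1, h2⟩ := seg_mem hp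
        have hp1 : p.1 = x := by rw [← hxe]
        have hp2 : p.2 = x^2 + 1/4 := by rw [← hxe]
        simp only at h1 h2
        -- p.1 = k, so x = k ; p.2 = (1-t)(-1) + t k² ≤ k², but p.2 = k² + 1/4
        have hx : x = (k.val:ℝ) := by rw [← hp1, h1]; ring
        rw [hx] at hp2
        nlinarith [h2, hp2, sq_nonneg ((k.val:ℝ))]
      · have hmk : m ≠ k := fun h => hw2 (by rw [h])
        rw [Set.eq_empty_iff_forall_notMem]
        rintro p ⟨hp, hpk⟩
        rw [Fw_eq, Set.mem_singleton_iff] at hpk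
        obtain ⟨t, ht0, ht1, h1, h2⟩ := seg_mem hp
        rw [hpk] at h1
        simp only at h1
        have : (m.val:ℝ) = (k.val:ℝ) := by linarith [h1]
        exact fin_cast_ne hmk this
  -- non-adjacent points cannot see each other: the arc blocks every chord
  have NS : ∀ k m : Fin n, k ≠ m → ¬ Sightline (myF n) (Sum.inr k) (Sum.inr m) := by
    rintro k m hkm ⟨a, ha, b, hb, hseg⟩
    rw [Fw_eq, Set.mem_singleton_iff] at ha hb
    subst ha; subst hb
    have h := hseg (Sum.inl 0) (by simp) (by simp)
    set K : ℝ := (k.val : ℝ) with hK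
    set M : ℝ := (m.val : ℝ) with hM
    have hK0 : (0:ℝ) ≤ K := Nat.cast_nonneg _
    have hM0 : (0:ℝ) ≤ M := Nat.cast_nonneg _
    have hne : k.val ≠ m.val := fun hv => hkm (Fin.ext hv)
    have hKM : 1 ≤ (K - M)^2 := by
      rcases Nat.lt_or_ge k.val m.val with hlt | hge
      · have : K + 1 ≤ M := by rw [hK, hM]; exact_mod_cast hlt
        nlinarith
      · have hlt : m.val < k.val := lt_of_le_of_ne hge (Ne.symm hne)
        have : M + 1 ≤ K := by rw [hK, hM]; exact_mod_cast hlt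
        nlinarith
    set g : ℝ → ℝ := fun t => (1-t)*K^2 + t*M^2 - ((1-t)*K + t*M)^2 - 1/4 with hg
    have hgc : ContinuousOn g (Set.Icc 0 (1/2)) := by fun_prop
    have hg0 : g 0 = -1/4 := by simp [hg]; ring
    have hghalf : 0 ≤ g (1/2) := by
      have : g (1/2) = (K - M)^2/4 - 1/4 := by simp [hg]; ring
      rw [this]; linarith
    have hIVT := intermediate_value_Icc (by norm_num : (0:ℝ) ≤ 1/2) hgc
    have h0mem : (0:ℝ) ∈ Set.Icc (g 0) (g (1/2)) := ⟨by rw [hg0]; norm_num, hghalf⟩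
    obtain ⟨t, htI, hgt⟩ := hIVT h0mem
    have ht0 : 0 ≤ t := htI.1
    have ht1 : t ≤ 1 := le_trans htI.2 (by norm_num)
    set x : ℝ := (1-t)*K + t*M with hx
    have hy : (1-t)*K^2 + t*M^2 = x^2 + 1/4 := by
      have : (1-t)*K^2 + t*M^2 - x^2 - 1/4 = 0 := hgt
      linarith
    have hx0 : 0 ≤ x := by
      have h1 := mul_nonneg (by linarith : (0:ℝ) ≤ 1 - t) hK0
      have h2 := mul_nonneg ht0 hM0
      rw [hx]; linarith
    have hx1 : x ≤ (n:ℝ) - 1 := by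
      have h1 := mul_nonneg (by linarith : (0:ℝ) ≤ 1 - t) (by linarith [fin_cast_le k] : (0:ℝ) ≤ (n:ℝ) - 1 - K)
      have h2 := mul_nonneg ht0 (by linarith [fin_cast_le m] : (0:ℝ) ≤ (n:ℝ) - 1 - M)
      rw [hx]; nlinarith
    have hpF : (x, x^2 + 1/4) ∈ myF n (Sum.inl 0) := by
      rw [F0_eq]; exact ⟨x, ⟨hx0, hx1⟩, rfl⟩
    have hpseg : (x, x^2 + 1/4) ∈ segment ℝ (K, K^2) (M, M^2) := by
      have hmem := seg_mem' (K, K^2) (M, M^2) ht0 ht1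
      simp only at hmem
      rw [hx, ← hy]
      exact hmem
    have : (x, x^2 + 1/4) ∈ (∅ : Set (ℝ × ℝ)) := h ▸ ⟨hpseg, hpF⟩
    exact this
  refine ⟨myF n, ⟨?_, ?_, ?_⟩, ?_, ?_⟩
  · -- nonempty
    rintro (i | k)
    · fin_cases i
      · show (myF n (Sum.inl 0)).Nonempty
        rw [F0_eq]; exact ⟨(0, 1/4), 0, ⟨le_refl _, hn1⟩, by norm_num⟩
      · show (myF n (Sum.inl 1)).Nonempty
        rw [F1_eq]; exact ⟨(-1, -1), -1, ⟨le_refl _, by linarith⟩, rfl⟩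
    · exact ⟨_, rfl⟩
  · -- disjoint
    have D01 : Disjoint (myF n (Sum.inl 0)) (myF n (Sum.inl 1)) := by
      rw [Set.disjoint_left, F0_eq, F1_eq]
      rintro p ⟨x, _, rfl⟩ ⟨y, _, hy⟩
      have : (-1:ℝ) = x^2 + 1/4 := congrArg Prod.snd hy
      nlinarith
    have D0w : ∀ m : Fin n, Disjoint (myF n (Sum.inl 0)) (myF n (Sum.inr m)) := by
      intro m
      rw [Set.disjoint_left, F0_eq, Fw_eq]
      rintro p ⟨x, _, rfl⟩ hp
      rw [Set.mem_singleton_iff] at hp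
      have h1 : x = (m.val:ℝ) := congrArg Prod.fst hp
      have h2 : x^2 + 1/4 = (m.val:ℝ)^2 := congrArg Prod.snd hp
      nlinarith
    have D1w : ∀ m : Fin n, Disjoint (myF n (Sum.inl 1)) (myF n (Sum.inr m)) := by
      intro m
      rw [Set.disjoint_left, F1_eq, Fw_eq]
      rintro p ⟨x, _, rfl⟩ hp
      rw [Set.mem_singleton_iff] at hp
      have h2 : (-1:ℝ) = (m.val:ℝ)^2 := congrArg Prod.snd hp
      nlinarith [sq_nonneg ((m.val:ℝ))]
    rintro (i | k) (j | m) huv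
    · fin_cases i <;> fin_cases j
      · exact absurd rfl huv
      · exact D01
      · exact D01.symm
      · exact absurd rfl huv
    · fin_cases i
      · exact D0w m
      · exact D1w m
    · fin_cases j
      · exact (D0w k).symm
      · exact (D1w k).symm
    · have hkm : k ≠ m := fun h => huv (by rw [h])
      rw [Set.disjoint_left, Fw_eq, Fw_eq]
      rintro p hp hp'
      rw [Set.mem_singleton_iff] at hp hp'
      rw [hp] at hp'
      exact fin_cast_ne hkm (congrArg Prod.fst hp')
  · -- adj_iff
    intro u v huv
    have hAdj : (K11n n).Adj u v ↔ (u.isLeft = true ∨ v.isLeft = true) := by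
      simp [K11n, SimpleGraph.fromRel_adj, huv]
    rw [hAdj]
    rcases u with i | k <;> rcases v with j | m
    · simp only [Sum.isLeft_inl, true_or, true_iff]
      fin_cases i <;> fin_cases j
      · exact absurd rfl huv
      · exact S01
      · exact sightline_symm S01
      · exact absurd rfl huv
    · simp only [Sum.isLeft_inl, true_or, true_iff]
      fin_cases i
      · exact S0w m
      · exact S1w m
    · simp only [Sum.isLeft_inl, Sum.isLeft_inr, or_true, true_iff]
      fin_cases j
      · exact sightline_symm (S0w k)
      · exact sightline_symm (S1w k)
    · simp only [Sum.isLeft_inr, or_self, false_iff, Bool.false_eq_true]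
      have hkm : k ≠ m := fun h => huv (by rw [h])
      exact NS k m hkm
  · -- compact
    rintro (i | k)
    · fin_cases i
      · show IsCompact (myF n (Sum.inl 0))
        rw [F0_eq]
        exact (isCompact_Icc).image (by fun_prop)
      · show IsCompact (myF n (Sum.inl 1))
        rw [F1_eq]
        exact (isCompact_Icc).image (by fun_prop)
    · rw [Fw_eq]; exact isCompact_singleton
  · -- connected
    rintro (i | k)
    · fin_cases i
      · show IsConnected (myF n (Sum.inl 0))
        rw [F0_eq]
        exact (isConnected_Icc hn1).image _ (by fun_prop)
      · show IsConnected (myF n (Sum.inl 1))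
        rw [F1_eq]
        exact (isConnected_Icc (by linarith)).image _ (by fun_prop)
    · rw [Fw_eq]; exact isConnected_singleton
end

section
/- There exists a visibility representation by three disjoint nonempty connected subsets of R^2 whose visibility graph is disconnected. Concretely, let A = {(x, sqrt(x)·sin(1/x)) : 0 < x ≤ 1}, B = {(x, x + sqrt(x)·sin(1/x)) : 0 < x ≤ 1}, and C = {(0,0)}; then A and B are mutually visible, but every segment from C to a point of A is blocked by B or A, and every segment from C to a point of B is blocked, so the visibility graph is the disjoint union of an edge and an isolated vertex. -/
open Set

noncomputable def A14 : Set (ℝ × ℝ) :=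
  {p | ∃ x : ℝ, 0 < x ∧ x ≤ 1 ∧ p = (x, Real.sqrt x * Real.sin (1 / x))}

noncomputable def B14 : Set (ℝ × ℝ) :=
  {p | ∃ x : ℝ, 0 < x ∧ x ≤ 1 ∧ p = (x, x + Real.sqrt x * Real.sin (1 / x))}

def C14 : Set (ℝ × ℝ) := {((0 : ℝ), (0 : ℝ))}

noncomputable def F14 : Fin 3 → Set (ℝ × ℝ) := ![A14, B14, C14]

lemma key14 (m x₀ : ℝ) (hx₀ : 0 < x₀) :
    ∃ x : ℝ, 0 < x ∧ x < x₀ ∧ x ≤ 1 ∧ Real.sin (1/x) = m * Real.sqrt x := by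
  obtain ⟨N, hN⟩ := exists_nat_gt (max ((|m|+1)^2) (1/x₀))
  have hN1 : ((|m|+1)^2 : ℝ) < N := lt_of_le_of_lt (le_max_left _ _) hN
  have hN2 : (1/x₀ : ℝ) < N := lt_of_le_of_lt (le_max_right _ _) hN
  have hNpos : (0:ℝ) < N := lt_of_le_of_lt (by positivity) hN1
  have hN1' : (1:ℝ) ≤ N := by nlinarith [abs_nonneg m]
  have hpi := Real.pi_gt_three
  set t₁ : ℝ := Real.pi/2 + N * (2*Real.pi) with ht₁
  set t₂ : ℝ := -(Real.pi/2) + (N+1 : ℕ) * (2*Real.pi) with ht₂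
  have hNt : (N:ℝ) < t₁ := by
    rw [ht₁]; nlinarith [hpi, (Nat.cast_nonneg N : (0:ℝ) ≤ N)]
  have ht₁pos : 0 < t₁ := lt_trans hNpos hNt
  have ht₁₂ : t₁ < t₂ := by rw [ht₁, ht₂]; push_cast; nlinarith [Real.pi_pos]
  have ht₂pos : 0 < t₂ := lt_trans ht₁pos ht₁₂
  set x₁ : ℝ := 1/t₁ with hx₁
  set x₂ : ℝ := 1/t₂ with hx₂
  have hx₂pos : 0 < x₂ := by positivity
  have hx₂₁ : x₂ < x₁ := by
    rw [hx₁, hx₂]; exact one_div_lt_one_div_of_lt ht₁pos ht₁₂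
  have hx₁1 : x₁ ≤ 1 := by
    rw [hx₁]; rw [div_le_one ht₁pos]; linarith
  have hx₁x₀ : x₁ < x₀ := by
    rw [hx₁, div_lt_iff₀ ht₁pos]
    have : 1/x₀ < t₁ := lt_trans hN2 hNt
    rw [div_lt_iff₀ hx₀] at this; linarith
  have hx₁small : x₁ < 1/(|m|+1)^2 := by
    rw [hx₁]
    apply one_div_lt_one_div_of_lt (by positivity)
    linarith
  have hb : ∀ x : ℝ, 0 < x → x ≤ x₁ → |m * Real.sqrt x| < 1 := by
    intro x hx hxx₁
    have h1 : Real.sqrt x ≤ Real.sqrt x₁ := Real.sqrt_le_sqrt hxx₁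
    have h2 : Real.sqrt x₁ ^ 2 = x₁ := Real.sq_sqrt (by positivity)
    have h3 : (0:ℝ) ≤ Real.sqrt x₁ := Real.sqrt_nonneg _
    have h4 : (0:ℝ) ≤ Real.sqrt x := Real.sqrt_nonneg _
    rw [abs_mul, abs_of_nonneg h4]
    have hm : (0:ℝ) ≤ |m| := abs_nonneg m
    have h5 : x₁ * (|m|+1)^2 < 1 := by
      have hd : (0:ℝ) < (|m|+1)^2 := by positivity
      rw [lt_div_iff₀ hd] at hx₁small; exact hx₁small
    have key : (|m|+1) * Real.sqrt x₁ < 1 := by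
      nlinarith [h2, h5, h3, hm]
    nlinarith
  set f : ℝ → ℝ := fun x => Real.sin (1/x) - m * Real.sqrt x with hf
  have hcont : ContinuousOn f (Icc x₂ x₁) := by
    apply ContinuousOn.sub
    · apply Real.continuous_sin.comp_continuousOn
      apply ContinuousOn.div continuousOn_const continuousOn_id
      intro x hx; exact ne_of_gt (lt_of_lt_of_le hx₂pos hx.1)
    · exact (continuous_const.mul Real.continuous_sqrt).continuousOn
  have hf₂ : f x₂ < 0 := by
    have hs : Real.sin (1/x₂) = -1 := by
      rw [hx₂, one_div_one_div, ht₂, Real.sin_add_nat_mul_two_pi, Real.sin_neg,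
        Real.sin_pi_div_two]
    have := hb x₂ hx₂pos (le_of_lt hx₂₁)
    rw [hf]; simp only [hs]
    rw [abs_lt] at this; linarith
  have hf₁ : 0 < f x₁ := by
    have hs : Real.sin (1/x₁) = 1 := by
      rw [hx₁, one_div_one_div, ht₁, Real.sin_add_nat_mul_two_pi, Real.sin_pi_div_two]
    have := hb x₁ (lt_trans hx₂pos hx₂₁) le_rfl
    rw [hf]; simp only [hs]
    rw [abs_lt] at this; linarith
  have := intermediate_value_Icc (le_of_lt hx₂₁) hcont
  obtain ⟨x, hxmem, hfx⟩ := this ⟨le_of_lt hf₂, le_of_lt hf₁⟩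
  refine ⟨x, lt_of_lt_of_le hx₂pos hxmem.1, lt_of_le_of_lt hxmem.2 hx₁x₀,
    le_trans hxmem.2 hx₁1, ?_⟩
  have : Real.sin (1/x) - m * Real.sqrt x = 0 := hfx
  linarith

lemma blocked14 (c x₀ y₀ : ℝ) (hx₀ : 0 < x₀) :
    ∃ x : ℝ, 0 < x ∧ x ≤ 1 ∧
      ((x, c*x + Real.sqrt x * Real.sin (1/x)) : ℝ × ℝ) ∈
        segment ℝ ((x₀, y₀) : ℝ × ℝ) ((0:ℝ), (0:ℝ)) := by
  obtain ⟨x, hx0, hxx₀, hx1, hsin⟩ := key14 ((y₀ - c*x₀)/x₀) x₀ hx₀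
  refine ⟨x, hx0, hx1, ?_⟩
  rw [segment_symm, segment_eq_image]
  refine ⟨x/x₀, ⟨by positivity, le_of_lt ((div_lt_one hx₀).mpr hxx₀)⟩, ?_⟩
  have hsq : Real.sqrt x * Real.sqrt x = x := Real.mul_self_sqrt hx0.le
  have hx₀ne : x₀ ≠ 0 := ne_of_gt hx₀
  simp only [Prod.smul_mk, smul_eq_mul, Prod.mk_add_mk, mul_zero, add_zero, zero_add,
    Prod.mk.injEq]
  have hsin' : Real.sqrt x * Real.sin (1/x) = (y₀ - c*x₀)/x₀ * x := by
    rw [hsin]; linear_combination ((y₀ - c*x₀)/x₀) * hsq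
  constructor
  · field_simp
  · rw [hsin']; field_simp; ring

-- connectivity of A-like sets
lemma conn14 (c : ℝ) :
    IsConnected {p : ℝ × ℝ | ∃ x : ℝ, 0 < x ∧ x ≤ 1 ∧
      p = (x, c*x + Real.sqrt x * Real.sin (1 / x))} := by
  have himg : {p : ℝ × ℝ | ∃ x : ℝ, 0 < x ∧ x ≤ 1 ∧
      p = (x, c*x + Real.sqrt x * Real.sin (1 / x))} =
      (fun x : ℝ => ((x, c*x + Real.sqrt x * Real.sin (1 / x)) : ℝ × ℝ)) '' Ioc 0 1 := by
    ext p
    simp only [mem_setOf_eq, mem_image, mem_Ioc]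
    constructor
    · rintro ⟨x, h1, h2, h3⟩; exact ⟨x, ⟨h1, h2⟩, h3.symm⟩
    · rintro ⟨x, ⟨h1, h2⟩, h3⟩; exact ⟨x, h1, h2, h3.symm⟩
  rw [himg]
  apply (isConnected_Ioc zero_lt_one).image
  apply ContinuousOn.prodMk continuousOn_id
  apply ContinuousOn.add ((continuous_const.mul continuous_id).continuousOn)
  apply ContinuousOn.mul Real.continuous_sqrt.continuousOn
  apply Real.continuous_sin.comp_continuousOn
  exact ContinuousOn.div continuousOn_const continuousOn_id
    (fun x hx => ne_of_gt hx.1)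

theorem stmt14 :
    (∀ i, IsConnected (F14 i)) ∧ (∀ i j, i ≠ j → Disjoint (F14 i) (F14 j)) ∧
    Sightline F14 0 1 ∧ ¬ Sightline F14 0 2 ∧ ¬ Sightline F14 1 2 := by
  have hF0 : F14 0 = A14 := rfl
  have hF1 : F14 1 = B14 := rfl
  have hF2 : F14 2 = C14 := rfl
  have hA : A14 = {p : ℝ × ℝ | ∃ x : ℝ, 0 < x ∧ x ≤ 1 ∧
      p = (x, 0*x + Real.sqrt x * Real.sin (1 / x))} := by
    simp only [A14, zero_mul, zero_add]
  have hB : B14 = {p : ℝ × ℝ | ∃ x : ℝ, 0 < x ∧ x ≤ 1 ∧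
      p = (x, 1*x + Real.sqrt x * Real.sin (1 / x))} := by
    simp only [B14, one_mul]
  refine ⟨?_, ?_, ?_, ?_, ?_⟩
  · intro i
    fin_cases i
    · show IsConnected A14
      rw [hA]; exact conn14 0
    · show IsConnected B14
      rw [hB]; exact conn14 1
    · show IsConnected C14
      exact isConnected_singleton
  · -- disjointness
    have hAB : Disjoint A14 B14 := by
      rw [disjoint_left]
      rintro p ⟨x, hx0, hx1, rfl⟩ ⟨y, hy0, hy1, hpy⟩
      rw [Prod.mk.injEq] at hpy
      obtain ⟨rfl, h2⟩ := hpy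
      nlinarith
    have hAC : Disjoint A14 C14 := by
      rw [disjoint_left]
      rintro p ⟨x, hx0, hx1, rfl⟩ hp
      simp only [C14, mem_singleton_iff, Prod.mk.injEq] at hp
      exact absurd hp.1 (ne_of_gt hx0)
    have hBC : Disjoint B14 C14 := by
      rw [disjoint_left]
      rintro p ⟨x, hx0, hx1, rfl⟩ hp
      simp only [C14, mem_singleton_iff, Prod.mk.injEq] at hp
      exact absurd hp.1 (ne_of_gt hx0)
    intro i j hij
    fin_cases i <;> fin_cases j <;>
      first
        | exact absurd rfl hij
        | exact hAB | exact hAC | exact hBC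
        | exact hAB.symm | exact hAC.symm | exact hBC.symm
  · -- Sightline 0 1
    refine ⟨((1 : ℝ), Real.sin 1), ?_, ((1 : ℝ), 1 + Real.sin 1), ?_, ?_⟩
    · rw [hF0]; exact ⟨1, one_pos, le_rfl, by norm_num⟩
    · rw [hF1]; exact ⟨1, one_pos, le_rfl, by norm_num⟩
    · intro w hw0 hw1
      have hw2 : w = 2 := by omega
      subst hw2
      rw [hF2]
      ext p
      simp only [mem_inter_iff, C14, mem_singleton_iff, mem_empty_iff_false, iff_false,
        not_and]
      intro hp hpc
      rw [segment_eq_image] at hp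
      obtain ⟨t, _, ht⟩ := hp
      have : p.1 = 1 := by
        rw [← ht]; simp; try ring
      rw [hpc] at this; norm_num at this
  · -- ¬ Sightline 0 2
    rintro ⟨a, ha, b, hb, hblock⟩
    rw [hF0] at ha; rw [hF2] at hb
    obtain ⟨x₀, hx₀0, hx₀1, rfl⟩ := ha
    rw [C14, mem_singleton_iff] at hb; subst hb
    obtain ⟨x, hx0, hx1, hseg⟩ := blocked14 1 x₀ (Real.sqrt x₀ * Real.sin (1/x₀)) hx₀0
    have := hblock 1 (by decide) (by decide)
    rw [hF1] at this
    have hmem : ((x, 1*x + Real.sqrt x * Real.sin (1/x)) : ℝ × ℝ) ∈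
        segment ℝ ((x₀, Real.sqrt x₀ * Real.sin (1/x₀)) : ℝ × ℝ) ((0:ℝ),(0:ℝ)) ∩ B14 := by
      refine ⟨hseg, x, hx0, hx1, by rw [one_mul]⟩
    rw [this] at hmem
    exact hmem
  · -- ¬ Sightline 1 2
    rintro ⟨a, ha, b, hb, hblock⟩
    rw [hF1] at ha; rw [hF2] at hb
    obtain ⟨x₀, hx₀0, hx₀1, rfl⟩ := ha
    rw [C14, mem_singleton_iff] at hb; subst hb
    obtain ⟨x, hx0, hx1, hseg⟩ := blocked14 0 x₀ (x₀ + Real.sqrt x₀ * Real.sin (1/x₀)) hx₀0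
    have := hblock 0 (by decide) (by decide)
    rw [hF0] at this
    have hmem : ((x, 0*x + Real.sqrt x * Real.sin (1/x)) : ℝ × ℝ) ∈
        segment ℝ ((x₀, x₀ + Real.sqrt x₀ * Real.sin (1/x₀)) : ℝ × ℝ) ((0:ℝ),(0:ℝ)) ∩ A14 := by
      refine ⟨hseg, x, hx0, hx1, by rw [zero_mul, zero_add]⟩
    rw [this] at hmem
    exact hmem
end

section
/- If a connected graph has n vertices ordered v_1, ..., v_n such that each initial segment induces a connected subgraph, then it admits a representation by pairwise disjoint nonempty (not necessarily connected) subsets of R^2 in which two vertices are adjacent iff there is a segment between points of their regions meeting no other region; hence every finite connected graph is a visibility graph when representing regions need not be connected. -/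
lemma exists_mem_segment_dist_eq {E : Type*} [NormedAddCommGroup E] [NormedSpace ℝ E]
    {a b c : E} {r : ℝ} (ha : dist a c ≤ r) (hb : r ≤ dist b c) :
    ∃ x ∈ segment ℝ a b, dist x c = r :=
  (convex_segment a b).isPreconnected.intermediate_value (left_mem_segment ℝ a b)
    (right_mem_segment ℝ a b) (continuous_id.dist continuous_const).continuousOn ⟨ha, hb⟩

lemma exists_pairwise_le_dist (E : Type*) [NormedAddCommGroup E] [NormedSpace ℝ E]
    [NontrivialTopology E] (ι : Type*) [Countable ι] (D : ℝ) :
    ∃ c : ι → E, Pairwise fun i j => D ≤ dist (c i) (c j) := by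
  obtain ⟨n, hn⟩ := Countable.exists_injective_nat ι
  obtain ⟨e, he⟩ := exists_norm_eq E zero_le_one
  refine ⟨fun i => (|D| * n i) • e, fun i j hij => ?_⟩
  have hnij : (1 : ℝ) ≤ |(n i : ℝ) - n j| := by
    have hne : (n i : ℤ) - n j ≠ 0 := sub_ne_zero.mpr (by exact_mod_cast hn.ne hij)
    exact_mod_cast Int.one_le_abs hne
  calc D ≤ |D| * 1 := by simpa using le_abs_self D
    _ ≤ |D| * |(n i : ℝ) - n j| := by gcongr
    _ = dist ((|D| * n i) • e) ((|D| * n j) • e) := by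
      rw [dist_eq_norm, ← sub_smul, norm_smul, he, ← mul_sub, Real.norm_eq_abs, abs_mul,
        abs_abs, mul_one]

lemma dist_add_mk_zero_self (p : ℝ × ℝ) (r : ℝ) : dist (p + (r, 0)) p = |r| := by
  simp [dist_self_add_left, Prod.norm_def]

section RingRegions

variable {V ι : Type*} {G : SimpleGraph V} {X : V} {s : ι → V}

def ringRegions (W : ∀ i, G.Walk (s i) X) (c : ι → ℝ × ℝ) (v : V) : Set (ℝ × ℝ) :=
  {x | ∃ i, ∃ k ≤ (W i).length, (W i).getVert k = v ∧ dist x (c i) = k + 1}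

variable {W : ∀ i, G.Walk (s i) X} {c : ι → ℝ × ℝ} {N : ℕ}

lemma ringRegions_nonempty {v : V} {i : ι} (hv : v ∈ (W i).support) :
    (ringRegions W c v).Nonempty := by
  obtain ⟨k, rfl, hk⟩ := SimpleGraph.Walk.mem_support_iff_exists_getVert.mp hv
  refine ⟨c i + ((k : ℝ) + 1, 0), i, k, hk, rfl, ?_⟩
  rw [dist_add_mk_zero_self, abs_of_nonneg (by positivity)]

lemma add_two_le_dist_of_ne (hc : Pairwise fun i j => 2 * N + 3 ≤ dist (c i) (c j)) {i j : ι}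
    (hij : i ≠ j) {x : ℝ × ℝ} (hx : dist x (c j) ≤ N + 1) : N + 2 ≤ dist x (c i) := by
  have := hc hij
  have := dist_triangle (c i) x (c j)
  linarith [dist_comm x (c i)]

lemma ringRegions_disjoint (hW : ∀ i, (W i).length ≤ N)
    (hc : Pairwise fun i j => 2 * N + 3 ≤ dist (c i) (c j)) {u v : V} (huv : u ≠ v) :
    Disjoint (ringRegions W c u) (ringRegions W c v) := by
  rw [Set.disjoint_left]
  rintro x ⟨i, k, hk, rfl, hxi⟩ ⟨j, m, hm, rfl, hxj⟩
  obtain rfl | hij := eq_or_ne i j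
  · have hkm : k = m := by exact_mod_cast (add_right_cancel (hxi.symm.trans hxj) : (k : ℝ) = m)
    exact huv (hkm ▸ rfl)
  · have hmN : (m : ℝ) ≤ N := by exact_mod_cast hm.trans (hW j)
    have hkN : (k : ℝ) ≤ N := by exact_mod_cast hk.trans (hW i)
    have := add_two_le_dist_of_ne hc hij (x := x) (by linarith)
    linarith

lemma sightline_ringRegions_getVert_succ (hW : ∀ i, (W i).length ≤ N)
    (hc : Pairwise fun i j => 2 * N + 3 ≤ dist (c i) (c j)) {i : ι} {k : ℕ}
    (hk : k < (W i).length) :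
    Sightline (ringRegions W c) ((W i).getVert k) ((W i).getVert (k + 1)) := by
  have ha : dist (c i + ((k : ℝ) + 1, 0)) (c i) = k + 1 := by
    rw [dist_add_mk_zero_self, abs_of_nonneg (by positivity)]
  have hb : dist (c i + ((k : ℝ) + 2, 0)) (c i) = k + 2 := by
    rw [dist_add_mk_zero_self, abs_of_nonneg (by positivity)]
  have hab : dist (c i + ((k : ℝ) + 1, 0)) (c i + ((k : ℝ) + 2, 0)) = 1 := by
    rw [dist_add_left, Prod.dist_eq]; norm_num [Real.dist_eq]
  refine ⟨_, ⟨i, k, hk.le, rfl, ha⟩, _, ⟨i, k + 1, hk, rfl, by push_cast; linarith⟩, ?_⟩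
  rintro w hwu hwv
  refine Set.eq_empty_iff_forall_notMem.mpr ?_
  rintro x ⟨hx, j, m, hm, rfl, hxj⟩
  have hsum := dist_add_dist_of_mem_segment hx
  have hxc : (k : ℝ) + 1 ≤ dist x (c i) ∧ dist x (c i) ≤ k + 2 := by
    rw [hab] at hsum
    constructor <;> linarith [dist_triangle_left (c i + ((k : ℝ) + 2, 0)) (c i) x,
      dist_triangle_left x (c i) (c i + ((k : ℝ) + 1, 0)),
      dist_nonneg (x := x) (y := c i + ((k : ℝ) + 2, 0)),
      dist_nonneg (x := c i + ((k : ℝ) + 1, 0)) (y := x)]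
  obtain rfl | hij := eq_or_ne i j
  · have hkm : k ≤ m := by exact_mod_cast (by linarith : (k : ℝ) ≤ m)
    have hmk : m ≤ k + 1 := by exact_mod_cast (by linarith : (m : ℝ) ≤ k + 1)
    obtain rfl | rfl : m = k ∨ m = k + 1 := by omega
    · exact hwu rfl
    · exact hwv rfl
  · have hkN : (k : ℝ) + 1 ≤ N := by exact_mod_cast hk.trans_le (hW i)
    have hmN : (m : ℝ) ≤ N := by exact_mod_cast hm.trans (hW j)
    have := add_two_le_dist_of_ne hc hij.symm (x := x) (by linarith)
    linarith

lemma exists_next_ring_between (hW : ∀ i, (W i).length ≤ N)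
    (hc : Pairwise fun i j => 2 * N + 3 ≤ dist (c i) (c j)) {u v : V} (huv : u ≠ v)
    {a b : ℝ × ℝ} (ha : a ∈ ringRegions W c u) (hb : b ∈ ringRegions W c v) :
    ∃ i, ∃ k < (W i).length,
      ((W i).getVert k = u ∧ dist a (c i) = k + 1 ∧ k + 2 ≤ dist b (c i)) ∨
      ((W i).getVert k = v ∧ dist b (c i) = k + 1 ∧ k + 2 ≤ dist a (c i)) := by
  obtain ⟨i, k, hk, hu, hai⟩ := ha
  obtain ⟨j, m, hm, hv, hbj⟩ := hb
  obtain rfl | hij := eq_or_ne i j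
  · rcases lt_trichotomy k m with hkm | rfl | hmk
    · refine ⟨i, k, hkm.trans_le hm, Or.inl ⟨hu, hai, ?_⟩⟩
      rw [hbj]
      exact_mod_cast (by omega : k + 2 ≤ m + 1)
    · exact absurd (hu.symm.trans hv) huv
    · refine ⟨i, m, hmk.trans_le hk, Or.inr ⟨hv, hbj, ?_⟩⟩
      rw [hai]
      exact_mod_cast (by omega : m + 2 ≤ k + 1)
  · have hkN : (k : ℝ) ≤ N := by exact_mod_cast hk.trans (hW i)
    have hmN : (m : ℝ) ≤ N := by exact_mod_cast hm.trans (hW j)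
    rcases hk.lt_or_eq with hk | rfl
    · have hk1N : (k : ℝ) + 1 ≤ N := by exact_mod_cast hk.trans_le (hW i)
      refine ⟨i, k, hk, Or.inl ⟨hu, hai, ?_⟩⟩
      linarith [add_two_le_dist_of_ne hc hij (x := b) (by linarith)]
    rcases hm.lt_or_eq with hm | rfl
    · have hm1N : (m : ℝ) + 1 ≤ N := by exact_mod_cast hm.trans_le (hW j)
      refine ⟨j, m, hm, Or.inr ⟨hv, hbj, ?_⟩⟩
      linarith [add_two_le_dist_of_ne hc hij.symm (x := a) (by linarith)]
    rw [SimpleGraph.Walk.getVert_length] at hu hv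
    exact absurd (hu.symm.trans hv) huv

lemma exists_segment_inter_ringRegions_of_not_adj {u v : V} (huv : ¬ G.Adj u v) {i : ι} {k : ℕ}
    (hk : k < (W i).length) (hu : (W i).getVert k = u) {a b : ℝ × ℝ}
    (ha : dist a (c i) = k + 1) (hb : k + 2 ≤ dist b (c i)) :
    ∃ w, w ≠ u ∧ w ≠ v ∧ (segment ℝ a b ∩ ringRegions W c w).Nonempty := by
  have hadj : G.Adj u ((W i).getVert (k + 1)) := hu ▸ (W i).adj_getVert_succ hk
  obtain ⟨x, hx, hxd⟩ := exists_mem_segment_dist_eq (a := a) (r := k + 2) (by linarith) hb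
  exact ⟨_, hadj.ne.symm, fun h => huv (h ▸ hadj), x, hx, i, k + 1, hk, rfl,
    by push_cast; linarith⟩

lemma adj_of_sightline_ringRegions (hW : ∀ i, (W i).length ≤ N)
    (hc : Pairwise fun i j => 2 * N + 3 ≤ dist (c i) (c j)) {u v : V} (huv : u ≠ v)
    (h : Sightline (ringRegions W c) u v) : G.Adj u v := by
  obtain ⟨a, ha, b, hb, hclear⟩ := h
  by_contra hnadj
  obtain ⟨i, k, hk, ⟨hu, hai, hbi⟩ | ⟨hv, hbi, hai⟩⟩ :=
    exists_next_ring_between hW hc huv ha hb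
  · obtain ⟨w, hwu, hwv, hw⟩ := exists_segment_inter_ringRegions_of_not_adj hnadj hk hu hai hbi
    exact hw.ne_empty (hclear w hwu hwv)
  · obtain ⟨w, hwv, hwu, hw⟩ :=
      exists_segment_inter_ringRegions_of_not_adj (fun h => hnadj h.symm) hk hv hbi hai
    rw [segment_symm] at hw
    exact hw.ne_empty (hclear w hwu hwv)

theorem isVisRep_ringRegions (hW : ∀ i, (W i).length ≤ N)
    (hc : Pairwise fun i j => 2 * N + 3 ≤ dist (c i) (c j))
    (hcover : ∀ v, ∃ i, v ∈ (W i).support)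
    (hedge : ∀ u v, G.Adj u v →
      ∃ i, ∃ k < (W i).length, (W i).getVert k = u ∧ (W i).getVert (k + 1) = v) :
    IsVisRep G (ringRegions W c) where
  nonempty v := (hcover v).elim fun _ hv => ringRegions_nonempty hv
  disjoint _ _ := ringRegions_disjoint hW hc
  adj_iff u v huv := by
    refine ⟨fun h => ?_, adj_of_sightline_ringRegions hW hc huv⟩
    obtain ⟨i, k, hk, rfl, rfl⟩ := hedge u v h
    exact sightline_ringRegions_getVert_succ hW hc hk

end RingRegions

theorem stmt15_general {V : Type*} [Fintype V] (G : SimpleGraph V) (hG : G.Connected) :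
    ∃ F : V → Set (ℝ × ℝ), (∀ v, (F v).Nonempty) ∧
      (∀ u v, u ≠ v → Disjoint (F u) (F v)) ∧
      ∀ u v, u ≠ v → (G.Adj u v ↔ Sightline F u v) := by
  classical
  obtain ⟨X⟩ := hG.nonempty
  let P (v : V) : G.Walk v X := (hG.preconnected v X).some
  let W (p : V × V) : G.Walk p.1 X := if h : G.Adj p.1 p.2 then .cons h (P p.2) else P p.1
  obtain ⟨N, hN⟩ := Finite.bddAbove_range fun p => (W p).length
  obtain ⟨c, hc⟩ := exists_pairwise_le_dist (ℝ × ℝ) (V × V) (2 * N + 3)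
  have hrep : IsVisRep G (ringRegions W c) :=
    isVisRep_ringRegions (fun p => hN ⟨p, rfl⟩) hc (fun v => ⟨(v, v), by simp [W]⟩)
      (fun u v h => ⟨(u, v), 0, by simp [W, h], by simp [W, h], by simp [W, h]⟩)
  exact ⟨_, hrep.nonempty, hrep.disjoint, hrep.adj_iff⟩

theorem stmt15 {V : Type*} [Fintype V] (G : SimpleGraph V) (hG : G.Connected)
    (e : Fin (Fintype.card V) ≃ V)
    (hord : ∀ k : Fin (Fintype.card V),
      (G.induce {v : V | ∃ i, i ≤ k ∧ e i = v}).Connected) :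
    ∃ F : V → Set (ℝ × ℝ), (∀ v, (F v).Nonempty) ∧
      (∀ u v, u ≠ v → Disjoint (F u) (F v)) ∧
      ∀ u v, u ≠ v → (G.Adj u v ↔ Sightline F u v) :=
  stmt15_general G hG
end

section
/- Every finite connected graph is representable as a visibility graph in R^3 with connected representing regions: start with a visibility representation of a spanning tree by solid balls (nested-sphere construction), and for each non-tree edge VW remove the open line segment between chosen points v ∈ V and w ∈ W from all regions; this adds exactly the sightline vw without disconnecting any region. -/
open Set

/-- A sightline in `ℝ³` between the regions of `u` and `v`. -/
def Sightline3 {V : Type*} (F : V → Set (ℝ × ℝ × ℝ)) (u v : V) : Prop :=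
  ∃ a ∈ F u, ∃ b ∈ F v, ∀ w, w ≠ u → w ≠ v → segment ℝ a b ∩ F w = ∅

/-- A visibility representation in `ℝ³`. -/
structure IsVisRep3 {V : Type*} (G : SimpleGraph V) (F : V → Set (ℝ × ℝ × ℝ)) : Prop where
  nonempty : ∀ v, (F v).Nonempty
  disjoint : ∀ u v, u ≠ v → Disjoint (F u) (F v)
  adj_iff : ∀ u v, u ≠ v → (G.Adj u v ↔ Sightline3 F u v)

/-!
Root a shortest-path spanning tree of `G` and realise it by nested balls of the sup metric of
`ℝ × ℝ × ℝ` (cubes) centred on the first axis: each vertex gets its closed cube minus the closed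
cubes of its children, which sit side by side in the inner half of the parent's cube. A segment
between the regions of two vertices that are not parent and child crosses a whole shell of a
third region (the child of one of them on the tree path to the other, or their lowest common
ancestor), hence meets it in infinitely many points.

For every edge `uv` of `G`, remove from all regions the line at its own small height through a
point on a face of `u`'s cube and one on a face of `v`'s cube, keeping these two points: their
segment becomes a sightline, while a segment meeting infinitely many removed points lies on one
such line, so it joins the two ends of an edge. Regions stay path-connected since the lines lie
in the plane where the second coordinate vanishes: a point can be pushed along the second axis
to a face of its cube, and the faces avoid all lines.
-/

open Function

theorem infinite_segment_inter_annulus {E : Type*} [NormedAddCommGroup E] [NormedSpace ℝ E]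
    {a b q : E} {A B : ℝ} (ha : dist a q ≤ A) (hAB : A < B) (hb : B ≤ dist b q) :
    (segment ℝ a b ∩ {y | A < dist y q ∧ dist y q < B}).Infinite := by
  set f : ℝ → ℝ := fun t => dist (AffineMap.lineMap a b t) q
  have hf : Continuous f := AffineMap.lineMap_continuous.dist continuous_const
  obtain ⟨t₀, ht₀, hft₀⟩ : (A + B) / 2 ∈ f '' Ioo 0 1 :=
    intermediate_value_Ioo zero_le_one hf.continuousOn
      ⟨by simp only [f, AffineMap.lineMap_apply_zero]; linarith,
        by simp only [f, AffineMap.lineMap_apply_one]; linarith⟩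
  have hU : Ioo 0 1 ∩ f ⁻¹' Ioo A B ∈ nhds t₀ :=
    (isOpen_Ioo.inter (isOpen_Ioo.preimage hf)).mem_nhds
      ⟨ht₀, by rw [mem_preimage, hft₀]; constructor <;> linarith⟩
  have hab : a ≠ b := by rintro rfl; linarith
  refine ((infinite_of_mem_nhds t₀ hU).image (AffineMap.lineMap_injective ℝ hab).injOn).mono ?_
  rintro _ ⟨t, ⟨ht, hft⟩, rfl⟩
  exact ⟨segment_eq_image_lineMap ℝ a b ▸ mem_image_of_mem _ (Ioo_subset_Icc_self ht), hft⟩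

theorem AffineMap.eq_of_mem_segment_of_ne {E F : Type*} [AddCommGroup E] [Module ℝ E]
    [AddCommGroup F] [Module ℝ F] (f : E →ᵃ[ℝ] F) {a b x y : E} (hx : x ∈ segment ℝ a b)
    (hy : y ∈ segment ℝ a b) (hxy : x ≠ y) (hf : f x = f y) : f a = f x ∧ f b = f x := by
  rw [segment_eq_image_lineMap] at hx hy
  obtain ⟨s, -, rfl⟩ := hx
  obtain ⟨t, -, rfl⟩ := hy
  simp only [f.apply_lineMap] at hf ⊢
  have hfab : f a = f b := by
    by_contra hne
    exact hxy (congrArg _ (AffineMap.lineMap_injective ℝ hne hf))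
  simp [hfab]

theorem SimpleGraph.Connected.exists_adj_dist_lt {V : Type*} {G : SimpleGraph V}
    (hG : G.Connected) {r v : V} (hv : v ≠ r) : ∃ u, G.Adj u v ∧ G.dist u r < G.dist v r := by
  obtain ⟨p, hp⟩ := hG.exists_walk_length_eq_dist v r
  cases p with
  | nil => exact absurd rfl hv
  | cons h q =>
    refine ⟨_, h.symm, ?_⟩
    have := SimpleGraph.dist_le q
    simp only [SimpleGraph.Walk.length_cons] at hp
    omega

structure ParentTree (V : Type*) where
  root : V
  parent : V → V
  depth : V → ℕ
  depth_parent_lt : ∀ v, v ≠ root → depth (parent v) < depth v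

namespace ParentTree

variable {V : Type*} (T : ParentTree V)

def IsDescendant : V → V → Prop :=
  Relation.ReflTransGen fun a b => a ≠ T.root ∧ T.parent a = b

theorem induction {motive : V → Prop} (root : motive T.root)
    (parent : ∀ v, v ≠ T.root → motive (T.parent v) → motive v) (v : V) : motive v := by
  induction h : T.depth v using Nat.strong_induction_on generalizing v with
  | _ n ih =>
    by_cases hv : v = T.root
    · exact hv ▸ root
    · exact parent v hv (ih _ (h ▸ T.depth_parent_lt v hv) _ rfl)

variable {T}

theorem isDescendant_root (v : V) : T.IsDescendant v T.root := by
  induction v using T.induction with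
  | root => exact Relation.ReflTransGen.refl
  | parent v hv h => exact Relation.ReflTransGen.head ⟨hv, rfl⟩ h

theorem IsDescendant.depth_le {i j : V} (h : T.IsDescendant j i) : T.depth i ≤ T.depth j := by
  induction h with
  | refl => exact le_rfl
  | tail _ hbc ih => exact hbc.2 ▸ (T.depth_parent_lt _ hbc.1).le.trans ih

theorem IsDescendant.parent_ne {c u : V} (h : T.IsDescendant u c) (hc : c ≠ T.root) :
    T.parent c ≠ u := by
  rintro rfl
  exact (T.depth_parent_lt c hc).not_ge h.depth_le

theorem IsDescendant.exists_child {i k : V} (h : T.IsDescendant k i) (hne : k ≠ i) :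
    ∃ c, c ≠ T.root ∧ T.parent c = i ∧ T.IsDescendant k c := by
  rcases Relation.ReflTransGen.cases_tail h with rfl | ⟨c, hkc, hc, rfl⟩
  · exact absurd rfl hne
  · exact ⟨c, hc, rfl, hkc⟩

theorem exists_siblings_of_not_isDescendant {u w : V} (huw : ¬ T.IsDescendant u w)
    (hwu : ¬ T.IsDescendant w u) :
    ∃ c₁ c₂, c₁ ≠ c₂ ∧ c₁ ≠ T.root ∧ c₂ ≠ T.root ∧ T.parent c₁ = T.parent c₂ ∧
      T.IsDescendant u c₁ ∧ T.IsDescendant w c₂ := by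
  induction u using T.induction generalizing w with
  | root => exact absurd (isDescendant_root w) hwu
  | parent u hu ih =>
    by_cases hw : T.IsDescendant w (T.parent u)
    · have hne : w ≠ T.parent u := fun h => huw (Relation.ReflTransGen.single ⟨hu, h.symm⟩)
      obtain ⟨c, hc, hpc, hwc⟩ := hw.exists_child hne
      refine ⟨u, c, ?_, hu, hc, hpc.symm, Relation.ReflTransGen.refl, hwc⟩
      rintro rfl
      exact hwu hwc
    · obtain ⟨c₁, c₂, h⟩ := ih (fun h => huw (Relation.ReflTransGen.head ⟨hu, rfl⟩ h)) hw
      exact ⟨c₁, c₂, h.1, h.2.1, h.2.2.1, h.2.2.2.1, .head ⟨hu, rfl⟩ h.2.2.2.2.1, h.2.2.2.2.2⟩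

end ParentTree

theorem SimpleGraph.Connected.exists_parentTree {V : Type*} {G : SimpleGraph V}
    (hG : G.Connected) : ∃ T : ParentTree V, ∀ v, v ≠ T.root → G.Adj (T.parent v) v := by
  obtain ⟨r⟩ := hG.nonempty
  choose! p hp using fun v (hv : v ≠ r) => hG.exists_adj_dist_lt hv
  exact ⟨⟨r, p, fun v => G.dist v r, fun v hv => (hp v hv).2⟩, fun v hv => (hp v hv).1⟩

structure BallTree (V E : Type*) [PseudoMetricSpace E] extends ParentTree V where
  center : V → E
  radius : V → ℝ
  radius_pos : ∀ v, 0 < radius v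
  dist_parent_add_radius_lt :
    ∀ v, v ≠ root → dist (center v) (center (parent v)) + radius v < radius (parent v) / 2
  two_mul_radius_add_le_dist : ∀ v w, v ≠ root → w ≠ root → v ≠ w → parent v = parent w →
    2 * (radius v + radius w) ≤ dist (center v) (center w)

namespace BallTree

section Metric

variable {V E : Type*} [PseudoMetricSpace E] (T : BallTree V E)

def region (i : V) : Set E :=
  {y | dist y (T.center i) ≤ T.radius i ∧
    ∀ j, j ≠ T.root → T.parent j = i → T.radius j < dist y (T.center j)}

variable {T}

theorem dist_add_radius_le_of_isDescendant {i j : V} (h : T.IsDescendant j i) :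
    dist (T.center j) (T.center i) + T.radius j ≤ T.radius i := by
  induction h with
  | refl => simp
  | @tail b c _ hbc ih =>
    obtain ⟨hb, rfl⟩ := hbc
    have := T.dist_parent_add_radius_lt b hb
    have := dist_triangle (T.center j) (T.center b) (T.center (T.parent b))
    linarith [T.radius_pos (T.parent b)]

theorem dist_add_radius_lt_of_isDescendant {i j : V} (h : T.IsDescendant j i) (hne : j ≠ i) :
    dist (T.center j) (T.center i) + T.radius j < T.radius i / 2 := by
  obtain ⟨c, hc, rfl, hjc⟩ := ParentTree.IsDescendant.exists_child h hne
  have := T.dist_parent_add_radius_lt c hc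
  have := dist_add_radius_le_of_isDescendant hjc
  have := dist_triangle (T.center j) (T.center c) (T.center (T.parent c))
  linarith

theorem radius_lt_half_of_parent_eq {i j : V} (hj : j ≠ T.root) (hji : T.parent j = i) :
    T.radius j < T.radius i / 2 := by
  have := T.dist_parent_add_radius_lt j hj
  rw [hji] at this
  linarith [dist_nonneg (x := T.center j) (y := T.center i)]

theorem dist_le_of_mem_region {i j : V} {y : E} (hy : y ∈ T.region j) (h : T.IsDescendant j i) :
    dist y (T.center i) ≤ T.radius i := by
  have := dist_add_radius_le_of_isDescendant h
  linarith [hy.1, dist_triangle y (T.center j) (T.center i)]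

theorem dist_lt_of_mem_region {i j : V} {y : E} (hy : y ∈ T.region j) (h : T.IsDescendant j i)
    (hne : j ≠ i) : dist y (T.center i) < T.radius i / 2 := by
  have := dist_add_radius_lt_of_isDescendant h hne
  linarith [hy.1, dist_triangle y (T.center j) (T.center i)]

theorem disjoint_region_of_isDescendant {u w : V} (h : T.IsDescendant w u) (hne : w ≠ u) :
    Disjoint (T.region u) (T.region w) := by
  obtain ⟨c, hc, hcu, hwc⟩ := ParentTree.IsDescendant.exists_child h hne
  refine Set.disjoint_left.2 fun y hyu hyw => ?_
  linarith [hyu.2 c hc hcu, dist_le_of_mem_region hyw hwc]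

theorem disjoint_region {u w : V} (hne : u ≠ w) : Disjoint (T.region u) (T.region w) := by
  by_cases hwu : T.IsDescendant w u
  · exact disjoint_region_of_isDescendant hwu hne.symm
  by_cases huw : T.IsDescendant u w
  · exact (disjoint_region_of_isDescendant huw hne).symm
  obtain ⟨c₁, c₂, hne₁₂, hc₁, hc₂, hp, hu, hw⟩ :=
    ParentTree.exists_siblings_of_not_isDescendant huw hwu
  refine Set.disjoint_left.2 fun y hyu hyw => ?_
  have := T.two_mul_radius_add_le_dist c₁ c₂ hc₁ hc₂ hne₁₂ hp
  linarith [dist_le_of_mem_region hyu hu, dist_le_of_mem_region hyw hw,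
    dist_triangle_left (T.center c₁) (T.center c₂) y, T.radius_pos c₁, T.radius_pos c₂]

theorem eq_of_mem_region {u w : V} {y : E} (hu : y ∈ T.region u) (hw : y ∈ T.region w) :
    u = w := by
  by_contra hne
  exact Set.disjoint_left.1 (disjoint_region hne) hu hw

theorem mem_region_of_half_lt {i : V} {y : E} (h₁ : T.radius i / 2 < dist y (T.center i))
    (h₂ : dist y (T.center i) ≤ T.radius i) : y ∈ T.region i := by
  refine ⟨h₂, fun j hj hji => ?_⟩
  have := T.dist_parent_add_radius_lt j hj
  rw [hji] at this
  linarith [dist_triangle y (T.center j) (T.center i)]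

theorem mem_region_parent {c : V} {y : E} (hc : c ≠ T.root)
    (h₁ : T.radius c < dist y (T.center c)) (h₂ : dist y (T.center c) < 2 * T.radius c) :
    y ∈ T.region (T.parent c) := by
  have hcp := T.dist_parent_add_radius_lt c hc
  refine ⟨by linarith [dist_triangle y (T.center c) (T.center (T.parent c)),
    dist_nonneg (x := T.center c) (y := T.center (T.parent c))], ?_⟩
  intro j hj hjp
  by_cases hjc : j = c
  · exact hjc ▸ h₁
  have := T.two_mul_radius_add_le_dist j c hj hc hjc hjp
  linarith [dist_triangle_left (T.center j) (T.center c) y, T.radius_pos j]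

end Metric

section Normed

variable {V E : Type*} [NormedAddCommGroup E] [NormedSpace ℝ E] {T : BallTree V E}

theorem exists_infinite_segment_inter_region_of_isDescendant {u w : V} {a b : E}
    (h : T.IsDescendant w u) (hne : w ≠ u) (hw : w ≠ T.root → T.parent w ≠ u)
    (ha : a ∈ T.region u) (hb : b ∈ T.region w) :
    ∃ z, z ≠ u ∧ z ≠ w ∧ (segment ℝ a b ∩ T.region z).Infinite := by
  obtain ⟨c, hc, hcu, hwc⟩ := ParentTree.IsDescendant.exists_child h hne
  have hcw : c ≠ w := by
    rintro rfl
    exact hw hc hcu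
  refine ⟨c, fun h => ParentTree.IsDescendant.parent_ne .refl hc (hcu.trans h.symm), hcw, ?_⟩
  rw [segment_symm]
  exact (infinite_segment_inter_annulus (dist_lt_of_mem_region hb hwc hcw.symm).le
    (half_lt_self (T.radius_pos c)) (ha.2 c hc hcu).le).mono
    fun y hy => ⟨hy.1, mem_region_of_half_lt hy.2.1 hy.2.2.le⟩

theorem exists_infinite_segment_inter_region {u w : V} {a b : E} (hne : u ≠ w)
    (hu : u ≠ T.root → T.parent u ≠ w) (hw : w ≠ T.root → T.parent w ≠ u)
    (ha : a ∈ T.region u) (hb : b ∈ T.region w) :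
    ∃ z, z ≠ u ∧ z ≠ w ∧ (segment ℝ a b ∩ T.region z).Infinite := by
  by_cases hwu : T.IsDescendant w u
  · exact exists_infinite_segment_inter_region_of_isDescendant hwu hne.symm hw ha hb
  by_cases huw : T.IsDescendant u w
  · obtain ⟨z, hzw, hzu, hz⟩ :=
      exists_infinite_segment_inter_region_of_isDescendant huw hne hu hb ha
    exact ⟨z, hzu, hzw, segment_symm ℝ a b ▸ hz⟩
  obtain ⟨c₁, c₂, hne₁₂, hc₁, hc₂, hp, hu₁, hw₂⟩ :=
    ParentTree.exists_siblings_of_not_isDescendant huw hwu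
  have hb₁ : 2 * T.radius c₁ ≤ dist b (T.center c₁) := by
    linarith [T.two_mul_radius_add_le_dist c₁ c₂ hc₁ hc₂ hne₁₂ hp, dist_le_of_mem_region hb hw₂,
      dist_triangle_left (T.center c₁) (T.center c₂) b, T.radius_pos c₂]
  refine ⟨T.parent c₁, hu₁.parent_ne hc₁, hp ▸ hw₂.parent_ne hc₂, ?_⟩
  exact (infinite_segment_inter_annulus (dist_le_of_mem_region ha hu₁)
    (lt_two_mul_self (T.radius_pos c₁)) hb₁).mono
    fun y hy => ⟨hy.1, mem_region_parent hc₁ hy.2.1 hy.2.2⟩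

end Normed

end BallTree

theorem dist_axis (y : ℝ × ℝ × ℝ) (x : ℝ) :
    dist y (x, 0, 0) = max |y.1 - x| (max |y.2.1| |y.2.2|) := by
  simp [Prod.dist_eq, Real.dist_eq]

theorem two_mul_add_le_six_mul_abs_sub {k l : ℕ} (hkl : k ≠ l) :
    2 * ((1 / 2 : ℝ) ^ (k + 4) + (1 / 2) ^ (l + 4)) ≤
      6 * |(1 / 2 : ℝ) ^ (k + 4) - (1 / 2) ^ (l + 4)| := by
  wlog h : k < l generalizing k l
  · rw [add_comm, abs_sub_comm]
    exact this hkl.symm (by omega)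
  have hl : (1 / 2 : ℝ) ^ (l + 4) ≤ (1 / 2) ^ (k + 4) * (1 / 2) := by
    rw [← pow_succ]
    exact pow_le_pow_of_le_one (by norm_num) (by norm_num) (by omega)
  have := pow_pos (by norm_num : (0 : ℝ) < 1 / 2) (l + 4)
  rw [abs_of_nonneg (by linarith)]
  linarith

namespace ParentTree

variable {V : Type*} (T : ParentTree V) (slot : V → ℕ)

-- Siblings in distinct slots have radii differing by a factor `≥ 2`, so their offsets of `6`
-- radii from the parent's centre keep them apart.
open Classical in
noncomputable def axisRadius (v : V) : ℝ :=
  if h : v = T.root then 1 else (1 / 2) ^ (slot v + 4) * axisRadius (T.parent v)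
termination_by T.depth v
decreasing_by exact T.depth_parent_lt v h

open Classical in
noncomputable def axisCenter (v : V) : ℝ :=
  if h : v = T.root then 0 else axisCenter (T.parent v) + 6 * T.axisRadius slot v
termination_by T.depth v
decreasing_by exact T.depth_parent_lt v h

theorem axisRadius_of_ne_root {v : V} (hv : v ≠ T.root) :
    T.axisRadius slot v = (1 / 2) ^ (slot v + 4) * T.axisRadius slot (T.parent v) := by
  rw [axisRadius, dif_neg hv]

theorem axisCenter_of_ne_root {v : V} (hv : v ≠ T.root) :
    T.axisCenter slot v = T.axisCenter slot (T.parent v) + 6 * T.axisRadius slot v := by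
  rw [axisCenter, dif_neg hv]

theorem axisRadius_pos (v : V) : 0 < T.axisRadius slot v := by
  induction v using T.induction with
  | root => simp [axisRadius]
  | parent v hv ih => rw [axisRadius_of_ne_root T slot hv]; positivity

variable {slot}

noncomputable def toBallTree (hslot : Injective slot) : BallTree V (ℝ × ℝ × ℝ) where
  toParentTree := T
  center v := (T.axisCenter slot v, 0, 0)
  radius := T.axisRadius slot
  radius_pos := T.axisRadius_pos slot
  dist_parent_add_radius_lt v hv := by
    have := T.axisRadius_pos slot (T.parent v)
    have : (1 / 2 : ℝ) ^ (slot v + 4) ≤ (1 / 2) ^ 4 :=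
      pow_le_pow_of_le_one (by norm_num) (by norm_num) (by omega)
    simp only [dist_axis, axisCenter_of_ne_root T slot hv, add_sub_cancel_left, abs_zero, max_self]
    rw [axisRadius_of_ne_root T slot hv, abs_of_pos (by positivity), max_eq_left (by positivity)]
    nlinarith
  two_mul_radius_add_le_dist v w hv hw hvw hp := by
    have hR := T.axisRadius_pos slot (T.parent w)
    have := two_mul_add_le_six_mul_abs_sub (hslot.ne hvw)
    simp only [dist_axis, axisCenter_of_ne_root T slot hv, axisCenter_of_ne_root T slot hw, hp,
      add_sub_add_left_eq_sub, abs_zero, max_self]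
    rw [axisRadius_of_ne_root T slot hv, axisRadius_of_ne_root T slot hw, hp,
      max_eq_left (abs_nonneg _), ← mul_sub, ← sub_mul, abs_mul, abs_mul, abs_of_pos hR,
      abs_of_pos (by norm_num : (0 : ℝ) < 6)]
    nlinarith

end ParentTree

theorem mem_uIcc_of_mem_segment {p q y : ℝ × ℝ × ℝ} (hy : y ∈ segment ℝ p q) :
    y.1 ∈ uIcc p.1 q.1 ∧ y.2.1 ∈ uIcc p.2.1 q.2.1 ∧ y.2.2 ∈ uIcc p.2.2 q.2.2 := by
  obtain ⟨h₁, h₂⟩ := Prod.segment_subset p q hy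
  obtain ⟨h₂₁, h₂₂⟩ := Prod.segment_subset p.2 q.2 h₂
  simp only [← segment_eq_uIcc]
  exact ⟨h₁, h₂₁, h₂₂⟩

theorem abs_le_abs_of_mem_uIcc {β β' s : ℝ} (hβ : β ∈ uIcc 0 s) (hβ' : β' ∈ uIcc β s) :
    |β| ≤ |β'| ∧ |β'| ≤ |s| ∧ (β' = 0 → β = 0) := by
  simp only [mem_uIcc] at hβ hβ'
  grind [abs_of_nonneg, abs_of_nonpos]

namespace BallTree

section Tunnels

variable {V : Type*} (T : BallTree V (ℝ × ℝ × ℝ)) (G : SimpleGraph V) (ζ : V × V → ℝ)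

def facePoint (i : V) (h : ℝ) : ℝ × ℝ × ℝ := ((T.center i).1 + T.radius i, 0, h)

def tunnel (e : V × V) : Set (ℝ × ℝ × ℝ) :=
  {y | y.2 = (0, ζ e)} \ {T.facePoint e.1 (ζ e), T.facePoint e.2 (ζ e)}

def tunnelRegion (i : V) : Set (ℝ × ℝ × ℝ) :=
  T.region i \ ⋃ (e : V × V) (_ : G.Adj e.1 e.2), T.tunnel ζ e

variable {T G ζ} (hT : ∀ v, (T.center v).2 = 0)
include hT

theorem dist_center (y : ℝ × ℝ × ℝ) (i : V) :
    dist y (T.center i) = max |y.1 - (T.center i).1| (max |y.2.1| |y.2.2|) := by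
  have hc : T.center i = ((T.center i).1, 0, 0) := Prod.ext rfl ((hT i).trans Prod.zero_eq_mk)
  conv_lhs => rw [hc]
  exact dist_axis _ _

theorem dist_center_center (i j : V) :
    dist (T.center j) (T.center i) = |(T.center j).1 - (T.center i).1| := by
  simp [dist_center hT, hT j]

theorem mem_region_of_face {i : V} {y : ℝ × ℝ × ℝ} (hy : dist y (T.center i) ≤ T.radius i)
    (hface : T.radius i ≤ |y.2.1| ∨ T.radius i ≤ |y.2.2|) : y ∈ T.region i := by
  refine ⟨hy, fun j hj hji => ?_⟩
  have := radius_lt_half_of_parent_eq hj hji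
  have := T.radius_pos i
  rw [dist_center hT]
  rcases hface with h | h
  · exact lt_max_of_lt_right (lt_max_of_lt_left (by linarith))
  · exact lt_max_of_lt_right (lt_max_of_lt_right (by linarith))

theorem facePoint_mem_region {i : V} {h : ℝ} (hh : |h| ≤ T.radius i) :
    T.facePoint i h ∈ T.region i := by
  have hi := T.radius_pos i
  refine ⟨?_, fun j hj hji => ?_⟩
  · simp [dist_center hT, facePoint, abs_of_pos hi, hh]
  · have := T.dist_parent_add_radius_lt j hj
    rw [hji, dist_center_center hT] at this
    rw [dist_center hT, facePoint]
    refine lt_max_of_lt_left ?_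
    linarith [le_abs_self ((T.center i).1 + T.radius i - (T.center j).1),
      le_abs_self ((T.center j).1 - (T.center i).1)]

theorem mem_tunnelRegion_of_abs_le {i : V} {a y : ℝ × ℝ × ℝ} (ha : a ∈ T.tunnelRegion G ζ i)
    (h₁ : y.1 = a.1) (h₂₂ : y.2.2 = a.2.2) (hle : |a.2.1| ≤ |y.2.1|)
    (hle' : |y.2.1| ≤ T.radius i) (h₀ : y.2.1 = 0 → a.2.1 = 0) :
    y ∈ T.tunnelRegion G ζ i := by
  obtain ⟨⟨ha, hchild⟩, hat⟩ := ha
  have hmono : ∀ j, dist a (T.center j) ≤ dist y (T.center j) := fun j => by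
    rw [dist_center hT, dist_center hT, h₁, h₂₂]
    exact max_le_max le_rfl (max_le_max hle le_rfl)
  refine ⟨⟨?_, fun j hj hji => (hchild j hj hji).trans_le (hmono j)⟩, ?_⟩
  · rw [dist_center hT] at ha ⊢
    rw [h₁, h₂₂]
    exact max_le (le_max_left _ _ |>.trans ha) (max_le hle' ((le_max_right _ _).trans
      ((le_max_right _ _).trans ha)))
  · by_cases hya : y = a
    · exact hya ▸ hat
    simp only [mem_iUnion, not_exists]
    rintro e - ⟨hye : y.2 = (0, ζ e), -⟩
    have hy₀ : y.2.1 = 0 := by rw [hye]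
    exact hya (Prod.ext h₁ (Prod.ext (hy₀.trans (h₀ hy₀).symm) h₂₂))

variable (hζ : Injective ζ) (hζr : ∀ e i, |ζ e| < T.radius i)
include hζr

theorem mem_tunnelRegion_of_face {i : V} {y : ℝ × ℝ × ℝ}
    (hy : dist y (T.center i) ≤ T.radius i) (hface : T.radius i ≤ |y.2.1| ∨ y.2.2 = T.radius i) :
    y ∈ T.tunnelRegion G ζ i := by
  have hi := T.radius_pos i
  refine ⟨mem_region_of_face hT hy (hface.imp_right fun h => by rw [h, abs_of_pos hi]), ?_⟩
  simp only [mem_iUnion, not_exists]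
  rintro e - ⟨hye : y.2 = (0, ζ e), -⟩
  rcases hface with h | h
  · simp only [hye, abs_zero] at h
    linarith
  · simp only [hye] at h
    linarith [hζr e i, le_abs_self (ζ e)]

theorem segment_subset_tunnelRegion {i : V} {p q : ℝ × ℝ × ℝ}
    (hp : dist p (T.center i) ≤ T.radius i) (hq : dist q (T.center i) ≤ T.radius i)
    (hface : ∀ y ∈ segment ℝ p q, T.radius i ≤ |y.2.1| ∨ y.2.2 = T.radius i) :
    segment ℝ p q ⊆ T.tunnelRegion G ζ i := fun y hy =>
  mem_tunnelRegion_of_face hT hζr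
    ((convex_closedBall (T.center i) (T.radius i)).segment_subset hp hq hy) (hface y hy)

theorem joinedIn_tunnelRegion {i : V} {a : ℝ × ℝ × ℝ} (ha : a ∈ T.tunnelRegion G ζ i) :
    JoinedIn (T.tunnelRegion G ζ i) a ((T.center i).1, T.radius i, T.radius i) := by
  set X := (T.center i).1
  set S := T.radius i
  have hS : 0 < S := T.radius_pos i
  have hdist : ∀ y : ℝ × ℝ × ℝ, |y.1 - X| ≤ S → |y.2.1| ≤ S → |y.2.2| ≤ S →
      dist y (T.center i) ≤ S := fun y h₁ h₂₁ h₂₂ => by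
    rw [dist_center hT]
    exact max_le h₁ (max_le h₂₁ h₂₂)
  have hda := ha.1.1
  rw [dist_center hT] at hda
  obtain ⟨ha₁, ha₂₁, ha₂₂⟩ : |a.1 - X| ≤ S ∧ |a.2.1| ≤ S ∧ |a.2.2| ≤ S := by
    simpa only [max_le_iff] using hda
  obtain ⟨s, hs, has⟩ : ∃ s, |s| = S ∧ a.2.1 ∈ uIcc 0 s := by
    rcases le_total 0 a.2.1 with h | h
    · exact ⟨S, abs_of_pos hS, by rw [mem_uIcc]; left; grind [abs_of_nonneg]⟩
    · exact ⟨-S, by rw [abs_neg, abs_of_pos hS], by rw [mem_uIcc]; right; grind [abs_of_nonpos]⟩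
  have hS' : |S| = S := abs_of_pos hS
  refine ((JoinedIn.of_segment_subset (y := (a.1, s, a.2.2)) fun y hy => ?_).trans
    (JoinedIn.of_segment_subset (y := (a.1, s, S)) ?_)).trans (JoinedIn.of_segment_subset ?_)
  · obtain ⟨h₁, h₂₁, h₂₂⟩ := mem_uIcc_of_mem_segment hy
    simp only [uIcc_self, mem_singleton_iff] at h₁ h₂₂
    obtain ⟨hle, hle', h₀⟩ := abs_le_abs_of_mem_uIcc has h₂₁
    exact mem_tunnelRegion_of_abs_le hT ha h₁ h₂₂ hle (hle'.trans hs.le) h₀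
  · refine segment_subset_tunnelRegion hT hζr (hdist _ ha₁ hs.le ha₂₂)
      (hdist _ ha₁ hs.le hS'.le) fun y hy => Or.inl ?_
    obtain ⟨-, h₂₁, -⟩ := mem_uIcc_of_mem_segment hy
    simp only [uIcc_self, mem_singleton_iff] at h₂₁
    rw [h₂₁, hs]
  · refine segment_subset_tunnelRegion hT hζr (hdist _ ha₁ hs.le hS'.le)
      (hdist _ (by simp [hS.le]) hS'.le hS'.le) fun y hy => Or.inr ?_
    obtain ⟨-, -, h₂₂⟩ := mem_uIcc_of_mem_segment hy
    simpa only [uIcc_self, mem_singleton_iff] using h₂₂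

theorem top_mem_tunnelRegion (i : V) :
    ((T.center i).1, T.radius i, T.radius i) ∈ T.tunnelRegion G ζ i := by
  have hS := T.radius_pos i
  exact mem_tunnelRegion_of_face hT hζr (by simp [dist_center hT, abs_of_pos hS, hS.le])
    (Or.inl (abs_of_pos hS).ge)

theorem isPathConnected_tunnelRegion (i : V) : IsPathConnected (T.tunnelRegion G ζ i) :=
  ⟨_, top_mem_tunnelRegion hT hζr i, fun {_} ha => (joinedIn_tunnelRegion hT hζr ha).symm⟩

theorem eq_or_eq_of_mem_tunnelRegion {e : V × V} {v : V} {c : ℝ × ℝ × ℝ} (he : G.Adj e.1 e.2)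
    (hc : c ∈ T.tunnelRegion G ζ v) (hc₂ : c.2 = (0, ζ e)) : v = e.1 ∨ v = e.2 := by
  have : c = T.facePoint e.1 (ζ e) ∨ c = T.facePoint e.2 (ζ e) := by
    by_contra h
    exact hc.2 (mem_iUnion₂.2 ⟨e, he, hc₂, by simpa only [mem_insert_iff, mem_singleton_iff]⟩)
  rcases this with rfl | rfl
  · exact Or.inl (eq_of_mem_region hc.1 (facePoint_mem_region hT (hζr _ _).le))
  · exact Or.inr (eq_of_mem_region hc.1 (facePoint_mem_region hT (hζr _ _).le))

theorem not_sightline [Finite V] (hTG : ∀ v, v ≠ T.root → G.Adj (T.parent v) v) {u w : V}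
    (huw : u ≠ w) (hadj : ¬ G.Adj u w) : ¬ Sightline3 (T.tunnelRegion G ζ) u w := by
  rintro ⟨a, ha, b, hb, hab⟩
  obtain ⟨z, hzu, hzw, hinf⟩ := exists_infinite_segment_inter_region huw
    (fun hu h => hadj (h ▸ (hTG u hu).symm)) (fun hw h => hadj (h ▸ hTG w hw)) ha.1 hb.1
  have hcover : segment ℝ a b ∩ T.region z ⊆
      ⋃ (e : V × V) (_ : G.Adj e.1 e.2), segment ℝ a b ∩ T.tunnel ζ e := by
    rintro y ⟨hy, hyz⟩
    by_contra hy'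
    refine eq_empty_iff_forall_notMem.1 (hab z hzu hzw) y ⟨hy, hyz, fun hyt => hy' ?_⟩
    obtain ⟨e, he, hye⟩ := mem_iUnion₂.1 hyt
    exact mem_iUnion₂.2 ⟨e, he, hy, hye⟩
  obtain ⟨e, he, hnt⟩ : ∃ e : V × V, G.Adj e.1 e.2 ∧ (segment ℝ a b ∩ T.tunnel ζ e).Nontrivial := by
    by_contra! h
    exact hinf ((finite_iUnion fun e => finite_iUnion fun he =>
      (h e he).finite).subset hcover)
  obtain ⟨x, ⟨hx, hxe, -⟩, y, ⟨hy, hye, -⟩, hxy⟩ := hnt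
  obtain ⟨ha₂, hb₂⟩ := (LinearMap.snd ℝ ℝ (ℝ × ℝ)).toAffineMap.eq_of_mem_segment_of_ne hx hy hxy
    (hxe.trans hye.symm)
  rcases eq_or_eq_of_mem_tunnelRegion hT hζr he ha (ha₂.trans hxe) with rfl | rfl <;>
    rcases eq_or_eq_of_mem_tunnelRegion hT hζr he hb (hb₂.trans hxe) with rfl | rfl
  exacts [huw rfl, hadj he, hadj he.symm, huw rfl]

include hζ

theorem facePoint_mem_tunnelRegion {e : V × V} {i : V} (hi : i = e.1 ∨ i = e.2) :
    T.facePoint i (ζ e) ∈ T.tunnelRegion G ζ i := by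
  refine ⟨facePoint_mem_region hT (hζr e i).le, ?_⟩
  simp only [mem_iUnion, not_exists]
  rintro e' - ⟨he' : (0, ζ e) = (0, ζ e'), hne⟩
  obtain rfl : e = e' := hζ (congrArg Prod.snd he')
  rcases hi with rfl | rfl <;> simp at hne

theorem sightline_of_adj {u v : V} (huv : G.Adj u v) : Sightline3 (T.tunnelRegion G ζ) u v := by
  refine ⟨_, facePoint_mem_tunnelRegion hT hζ hζr (e := (u, v)) (Or.inl rfl),
    _, facePoint_mem_tunnelRegion hT hζ hζr (e := (u, v)) (Or.inr rfl), fun w hwu hwv => ?_⟩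
  refine eq_empty_iff_forall_notMem.2 fun y ⟨hy, hyw⟩ => ?_
  obtain ⟨-, h₂₁, h₂₂⟩ := mem_uIcc_of_mem_segment hy
  simp only [facePoint, uIcc_self, mem_singleton_iff] at h₂₁ h₂₂
  rcases eq_or_eq_of_mem_tunnelRegion hT hζr huv hyw (Prod.ext h₂₁ h₂₂) with h | h
  exacts [hwu h, hwv h]

theorem isVisRep3_tunnelRegion [Finite V] (hTG : ∀ v, v ≠ T.root → G.Adj (T.parent v) v) :
    IsVisRep3 G (T.tunnelRegion G ζ) where
  nonempty i := ⟨_, top_mem_tunnelRegion hT hζr i⟩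
  disjoint _ _ h := (disjoint_region h).mono sdiff_subset sdiff_subset
  adj_iff _ _ h := ⟨sightline_of_adj hT hζ hζr,
    fun hs => by_contra fun hadj => not_sightline hT hζr hTG h hadj hs⟩

end Tunnels

end BallTree

theorem Set.Infinite.exists_injective_forall_mem {α β : Type*} [Countable α] {s : Set β}
    (hs : s.Infinite) : ∃ f : α → β, Injective f ∧ ∀ a, f a ∈ s := by
  obtain ⟨ι, hι⟩ := exists_injective_nat α
  exact ⟨fun a => hs.natEmbedding s (ι a),
    Subtype.val_injective.comp ((hs.natEmbedding s).injective.comp hι), fun a => Subtype.prop _⟩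

theorem BallTree.exists_isVisRep3 {V : Type*} [Finite V] (T : BallTree V (ℝ × ℝ × ℝ))
    (hT : ∀ v, (T.center v).2 = 0) (G : SimpleGraph V)
    (hTG : ∀ v, v ≠ T.root → G.Adj (T.parent v) v) :
    ∃ F : V → Set (ℝ × ℝ × ℝ), IsVisRep3 G F ∧ ∀ v, IsConnected (F v) := by
  have : Nonempty V := ⟨T.root⟩
  obtain ⟨i₀, hi₀⟩ := Finite.exists_min T.radius
  obtain ⟨ζ, hζ, hζm⟩ := (Ioo_infinite (T.radius_pos i₀)).exists_injective_forall_mem (α := V × V)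
  have hζr : ∀ e i, |ζ e| < T.radius i := fun e i => by
    rw [abs_of_pos (hζm e).1]
    exact (hζm e).2.trans_le (hi₀ i)
  exact ⟨_, isVisRep3_tunnelRegion hT hζ hζr hTG,
    fun v => (isPathConnected_tunnelRegion hT hζr v).isConnected⟩

theorem stmt16 {V : Type*} [Fintype V] (G : SimpleGraph V) (hG : G.Connected) :
    ∃ F : V → Set (ℝ × ℝ × ℝ), IsVisRep3 G F ∧ ∀ v, IsConnected (F v) := by
  obtain ⟨T, hTG⟩ := hG.exists_parentTree
  obtain ⟨slot, hslot⟩ := exists_injective_nat V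
  exact (T.toBallTree hslot).exists_isVisRep3 (fun _ => rfl) G hTG
end

section
/- Let L be a line in R^2 and let D_1, ..., D_k (k ≥ 1) be disjoint nonempty compact sets all contained in one open half-plane bounded by L. Choose D with minimal distance δ > 0 to L and d ∈ D achieving this distance. Then for any points a_1, b_1 on L, the segments from d to a_1 and from d to b_1 meet no D_j other than D. -/
open Set

theorem stmt18 (f : (ℝ × ℝ) →ₗ[ℝ] ℝ) (hf : f ≠ 0)
    (k : ℕ) (hk : 1 ≤ k) (D : Fin k → Set (ℝ × ℝ))
    (hcpt : ∀ j, IsCompact (D j)) (hne : ∀ j, (D j).Nonempty)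
    (hdisj : ∀ i j, i ≠ j → Disjoint (D i) (D j))
    (hside : ∀ j, D j ⊆ {x : ℝ × ℝ | f x < 0})
    (i0 : Fin k) (d : ℝ × ℝ) (hd : d ∈ D i0)
    (hmin : ∀ j, ∀ x ∈ D j,
      Metric.infDist d {y : ℝ × ℝ | f y = 0} ≤ Metric.infDist x {y : ℝ × ℝ | f y = 0}) :
    0 < Metric.infDist d {y : ℝ × ℝ | f y = 0} ∧
    ∀ a ∈ {y : ℝ × ℝ | f y = 0}, ∀ j, j ≠ i0 → segment ℝ d a ∩ D j = ∅ := by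
  have hfc : Continuous f := f.continuous_of_finiteDimensional
  set L := {y : ℝ × ℝ | f y = 0} with hL
  have hLclosed : IsClosed L := isClosed_eq hfc continuous_const
  have hL0 : (0 : ℝ × ℝ) ∈ L := by simp [hL]
  have hdL : d ∉ L := by
    intro h
    have := hside i0 hd
    simp only [hL, mem_setOf_eq] at this h
    linarith
  have hpos : 0 < Metric.infDist d L :=
    (hLclosed.notMem_iff_infDist_pos ⟨0, hL0⟩).mp hdL
  refine ⟨hpos, ?_⟩
  intro a ha j hj
  ext p
  simp only [mem_inter_iff, mem_empty_iff_false, iff_false, not_and]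
  intro hpseg hpD
  rw [segment_eq_image] at hpseg
  obtain ⟨t, ⟨ht0, ht1⟩, rfl⟩ := hpseg
  set p := (1 - t) • d + t • a with hp
  obtain ⟨y, hyL, hy⟩ := hLclosed.exists_infDist_eq_dist ⟨0, hL0⟩ d
  have hy'L : (1 - t) • y + t • a ∈ L := by
    simp only [hL, mem_setOf_eq, map_add, map_smul, smul_eq_mul] at *
    rw [hyL, ha]; ring
  have hdistp : Metric.infDist p L ≤ (1 - t) * Metric.infDist d L := by
    calc Metric.infDist p L ≤ dist p ((1 - t) • y + t • a) :=
          Metric.infDist_le_dist_of_mem hy'L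
      _ = dist ((1 - t) • d) ((1 - t) • y) := dist_add_right _ _ _
      _ = |1 - t| * dist d y := dist_smul₀ _ _ _
      _ = (1 - t) * Metric.infDist d L := by
          rw [hy, abs_of_nonneg (by linarith)]
  have h1 : Metric.infDist d L ≤ Metric.infDist p L := hmin j p hpD
  have ht : t = 0 := by nlinarith
  have hpd : p = d := by simp [hp, ht]
  exact (hdisj i0 j (Ne.symm hj)).ne_of_mem hd hpD hpd.symm
end
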